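/- arXiv:2208.00154 — 11 statements merged into one kernel-verified Lean document; each statement's English description precedes it below -/
import Mathlib

section
/- Let g be a Lie algebra over a field F of characteristic zero and let R ∈ End(g) satisfy the modified Yang–Baxter equation. Then the bracket [a,b]_R := [R(a),b] + [a,R(b)] is a Lie algebra bracket on g (bilinear, alternating, and satisfying the Jacobi identity). -/
/-- If `R` satisfies the modified Yang–Baxter equation on a Lie algebra `L`, then
`[a,b]_R := [R a, b] + [a, R b]` is a Lie algebra bracket on `L`:
bilinear, alternating, and satisfying the Jacobi identity. -/
theorem stmt_1 {F : Type*} [Field F] [CharZero F]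
    {L : Type*} [LieRing L] [LieAlgebra F L]
    (R : L →ₗ[F] L)
    (hR : ∀ a b : L, ⁅R a, R b⁆ - R ⁅R a, b⁆ - R ⁅a, R b⁆ + ⁅a, b⁆ = 0)
    (B : L → L → L) (hB : ∀ a b, B a b = ⁅R a, b⁆ + ⁅a, R b⁆) :
    (∀ a b c : L, B (a + b) c = B a c + B b c) ∧
    (∀ (t : F) (a b : L), B (t • a) b = t • B a b) ∧
    (∀ a b c : L, B a (b + c) = B a b + B a c) ∧
    (∀ (t : F) (a b : L), B a (t • b) = t • B a b) ∧
    (∀ a : L, B a a = 0) ∧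
    (∀ a b c : L, B a (B b c) + B b (B c a) + B c (B a b) = 0) := by
  have h2 : ∀ b c : L, R ⁅R b, c⁆ + R ⁅b, R c⁆ = ⁅R b, R c⁆ + ⁅b, c⁆ := by
    intro b c
    have h := hR b c
    have h' : (⁅R b, R c⁆ + ⁅b, c⁆) - (R ⁅R b, c⁆ + R ⁅b, R c⁆) = 0 :=
      calc (⁅R b, R c⁆ + ⁅b, c⁆) - (R ⁅R b, c⁆ + R ⁅b, R c⁆)
          = ⁅R b, R c⁆ - R ⁅R b, c⁆ - R ⁅b, R c⁆ + ⁅b, c⁆ := by abel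
        _ = 0 := h
    exact (sub_eq_zero.mp h').symm
  refine ⟨?_, ?_, ?_, ?_, ?_, ?_⟩
  · intro a b c; simp [hB, map_add, add_lie, lie_add]; abel
  · intro t a b; simp [hB, map_smul, smul_lie, lie_smul, smul_add]
  · intro a b c; simp [hB, map_add, add_lie, lie_add]; abel
  · intro t a b; simp [hB, map_smul, smul_lie, lie_smul, smul_add]
  · intro a; rw [hB, ← lie_skew (R a) a]; abel
  · intro a b c
    simp only [hB, map_add, lie_add, add_lie]
    have e1 : ⁅a, R ⁅R b, c⁆⁆ + ⁅a, R ⁅b, R c⁆⁆ = ⁅a, ⁅R b, R c⁆⁆ + ⁅a, ⁅b, c⁆⁆ := by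
      rw [← lie_add, h2, lie_add]
    have e2 : ⁅b, R ⁅R c, a⁆⁆ + ⁅b, R ⁅c, R a⁆⁆ = ⁅b, ⁅R c, R a⁆⁆ + ⁅b, ⁅c, a⁆⁆ := by
      rw [← lie_add, h2, lie_add]
    have e3 : ⁅c, R ⁅R a, b⁆⁆ + ⁅c, R ⁅a, R b⁆⁆ = ⁅c, ⁅R a, R b⁆⁆ + ⁅c, ⁅a, b⁆⁆ := by
      rw [← lie_add, h2, lie_add]
    have j0 := lie_jacobi a b c
    have j1 := lie_jacobi (R a) (R b) c
    have j2 := lie_jacobi (R b) (R c) a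
    have j3 := lie_jacobi (R c) (R a) b
    have key : (⁅R a, ⁅R b, c⁆⁆ + ⁅R a, ⁅b, R c⁆⁆ + (⁅a, R ⁅R b, c⁆⁆ + ⁅a, R ⁅b, R c⁆⁆))
        + (⁅R b, ⁅R c, a⁆⁆ + ⁅R b, ⁅c, R a⁆⁆ + (⁅b, R ⁅R c, a⁆⁆ + ⁅b, R ⁅c, R a⁆⁆))
        + (⁅R c, ⁅R a, b⁆⁆ + ⁅R c, ⁅a, R b⁆⁆ + (⁅c, R ⁅R a, b⁆⁆ + ⁅c, R ⁅a, R b⁆⁆)) = 0 := by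
      rw [e1, e2, e3]
      calc _ = (⁅a, ⁅b, c⁆⁆ + ⁅b, ⁅c, a⁆⁆ + ⁅c, ⁅a, b⁆⁆)
          + (⁅R a, ⁅R b, c⁆⁆ + ⁅R b, ⁅c, R a⁆⁆ + ⁅c, ⁅R a, R b⁆⁆)
          + (⁅R b, ⁅R c, a⁆⁆ + ⁅R c, ⁅a, R b⁆⁆ + ⁅a, ⁅R b, R c⁆⁆)
          + (⁅R c, ⁅R a, b⁆⁆ + ⁅R a, ⁅b, R c⁆⁆ + ⁅b, ⁅R c, R a⁆⁆) := by abel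
        _ = 0 := by rw [j0, j1, j2, j3]; abel
    calc _ = (⁅R a, ⁅R b, c⁆⁆ + ⁅R a, ⁅b, R c⁆⁆ + (⁅a, R ⁅R b, c⁆⁆ + ⁅a, R ⁅b, R c⁆⁆))
        + (⁅R b, ⁅R c, a⁆⁆ + ⁅R b, ⁅c, R a⁆⁆ + (⁅b, R ⁅R c, a⁆⁆ + ⁅b, R ⁅c, R a⁆⁆))
        + (⁅R c, ⁅R a, b⁆⁆ + ⁅R c, ⁅a, R b⁆⁆ + (⁅c, R ⁅R a, b⁆⁆ + ⁅c, R ⁅a, R b⁆⁆)) := by abel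
      _ = 0 := key
end

section
/- Let g be a Lie algebra with a non-degenerate, symmetric, invariant bilinear form ⟨·|·⟩, let R ∈ End(g) satisfy the modified Yang–Baxter equation, and let R* be the adjoint of R with respect to ⟨·|·⟩. Then [R(a),R*(b)] − R*([R(a),b]) + R*([a,R*(b)]) − [a,b] = 0 for all a,b ∈ g. -/
/-- Given a non-degenerate, symmetric, invariant bilinear form on a Lie algebra and an
`R`-matrix `R` with adjoint `Rs`, the identity
`[R a, Rs b] - Rs [R a, b] + Rs [a, Rs b] - [a,b] = 0` holds. -/
theorem stmt_2 {F : Type*} [Field F] [CharZero F]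
    {L : Type*} [LieRing L] [LieAlgebra F L]
    (β : L →ₗ[F] L →ₗ[F] F)
    (hsymm : ∀ a b : L, β a b = β b a)
    (hnd : ∀ a : L, (∀ b : L, β a b = 0) → a = 0)
    (hinv : ∀ a b c : L, β ⁅a, b⁆ c = β a ⁅b, c⁆)
    (R Rs : L →ₗ[F] L)
    (hadj : ∀ a b : L, β (R a) b = β a (Rs b))
    (hR : ∀ a b : L, ⁅R a, R b⁆ - R ⁅R a, b⁆ - R ⁅a, R b⁆ + ⁅a, b⁆ = 0) :
    ∀ a b : L, ⁅R a, Rs b⁆ - Rs ⁅R a, b⁆ + Rs ⁅a, Rs b⁆ - ⁅a, b⁆ = 0 := by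
  have hadj' : ∀ a b : L, β (Rs a) b = β a (R b) := by
    intro a b
    rw [hsymm, ← hadj, hsymm]
  have key : ∀ b c : L, Rs ⁅Rs b, c⁆ - Rs ⁅b, R c⁆ + ⁅Rs b, R c⁆ - ⁅b, c⁆ = 0 := by
    intro b c
    apply hnd
    intro d
    have t1 : β (Rs ⁅Rs b, c⁆) d = β b (R ⁅c, R d⁆) := by
      rw [hadj', hinv, hadj']
    have t2 : β (Rs ⁅b, R c⁆) d = β b ⁅R c, R d⁆ := by
      rw [hadj', hinv]
    have t3 : β ⁅Rs b, R c⁆ d = β b (R ⁅R c, d⁆) := by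
      rw [hinv, hadj']
    have t4 : β ⁅b, c⁆ d = β b ⁅c, d⁆ := hinv b c d
    have hy := hR c d
    have : β b (⁅R c, R d⁆ - R ⁅R c, d⁆ - R ⁅c, R d⁆ + ⁅c, d⁆) = 0 := by
      rw [hy]; simp
    simp only [map_sub, map_add, LinearMap.sub_apply, LinearMap.add_apply] at this ⊢
    rw [t1, t2, t3, t4]
    linear_combination -this
  intro a b
  apply hnd
  intro c
  have t1 : β ⁅R a, Rs b⁆ c = β a (Rs ⁅Rs b, c⁆) := by
    rw [hinv, hadj]
  have t2 : β (Rs ⁅R a, b⁆) c = β a (Rs ⁅b, R c⁆) := by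
    rw [hadj', hinv, hadj]
  have t3 : β (Rs ⁅a, Rs b⁆) c = β a ⁅Rs b, R c⁆ := by
    rw [hadj', hinv]
  have t4 : β ⁅a, b⁆ c = β a ⁅b, c⁆ := hinv a b c
  have hx : β a (Rs ⁅Rs b, c⁆ - Rs ⁅b, R c⁆ + ⁅Rs b, R c⁆ - ⁅b, c⁆) = 0 := by
    rw [key]; simp
  simp only [map_sub, map_add, LinearMap.sub_apply, LinearMap.add_apply] at hx ⊢
  rw [t1, t2, t3, t4]
  linear_combination hx
end

section
/- Let g be a Lie algebra with a non-degenerate, symmetric, invariant bilinear form ⟨·|·⟩, let R ∈ End(g) satisfy the modified Yang–Baxter equation, and let R* be its adjoint. Then [R*(a),R(b)] + R*([R*(a),b]) − R*([a,R(b)]) − [a,b] = 0 for all a,b ∈ g. -/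
/-- Given a non-degenerate, symmetric, invariant bilinear form on a Lie algebra and an
`R`-matrix `R` with adjoint `Rs`, the identity
`[Rs a, R b] + Rs [Rs a, b] - Rs [a, R b] - [a,b] = 0` holds. -/
theorem stmt_3 {F : Type*} [Field F] [CharZero F]
    {L : Type*} [LieRing L] [LieAlgebra F L]
    (β : L →ₗ[F] L →ₗ[F] F)
    (hsymm : ∀ a b : L, β a b = β b a)
    (hnd : ∀ a : L, (∀ b : L, β a b = 0) → a = 0)
    (hinv : ∀ a b c : L, β ⁅a, b⁆ c = β a ⁅b, c⁆)
    (R Rs : L →ₗ[F] L)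
    (hadj : ∀ a b : L, β (R a) b = β a (Rs b))
    (hR : ∀ a b : L, ⁅R a, R b⁆ - R ⁅R a, b⁆ - R ⁅a, R b⁆ + ⁅a, b⁆ = 0) :
    ∀ a b : L, ⁅Rs a, R b⁆ + Rs ⁅Rs a, b⁆ - Rs ⁅a, R b⁆ - ⁅a, b⁆ = 0 := by
  intro a b
  have h1 : ∀ x y : L, β (Rs x) y = β x (R y) := fun x y => by
    rw [hsymm, ← hadj, hsymm]
  apply hnd
  intro c
  have key : R ⁅R b, c⁆ + R ⁅b, R c⁆ - ⁅R b, R c⁆ - ⁅b, c⁆ = 0 := by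
    have h := hR b c
    have : R ⁅R b, c⁆ + R ⁅b, R c⁆ - ⁅R b, R c⁆ - ⁅b, c⁆ =
        -(⁅R b, R c⁆ - R ⁅R b, c⁆ - R ⁅b, R c⁆ + ⁅b, c⁆) := by abel
    rw [this, h, neg_zero]
  simp only [map_add, map_sub, LinearMap.add_apply, LinearMap.sub_apply]
  rw [hinv (Rs a) (R b) c, h1 a ⁅R b, c⁆, h1 ⁅Rs a, b⁆ c, hinv (Rs a) b (R c),
    h1 a ⁅b, R c⁆, h1 ⁅a, R b⁆ c, hinv a (R b) (R c), hinv a b c,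
    ← map_add, ← map_sub, ← map_sub, key, map_zero]
end

section
/- Let g be a Lie algebra with a non-degenerate, symmetric, invariant bilinear form, let R ∈ End(g) satisfy the modified Yang–Baxter equation, and let R* be its adjoint. Then (1/2)(R − R*) satisfies the modified Yang–Baxter equation if and only if the identity [R*(a),R*(b)] + R([R*(a),b]) + R([a,R*(b)]) + [a,b] = 0 holds for all a,b ∈ g. -/
/-- With `R` an `R`-matrix and `Rs` its adjoint with respect to a non-degenerate,
symmetric, invariant bilinear form, the antisymmetric part `(1/2)(R - Rs)` satisfies
the modified Yang–Baxter equation if and only if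
`[Rs a, Rs b] + R [Rs a, b] + R [a, Rs b] + [a,b] = 0` for all `a, b`. -/
theorem stmt_4 {F : Type*} [Field F] [CharZero F]
    {L : Type*} [LieRing L] [LieAlgebra F L]
    (β : L →ₗ[F] L →ₗ[F] F)
    (hsymm : ∀ a b : L, β a b = β b a)
    (hnd : ∀ a : L, (∀ b : L, β a b = 0) → a = 0)
    (hinv : ∀ a b c : L, β ⁅a, b⁆ c = β a ⁅b, c⁆)
    (R Rs : L →ₗ[F] L)
    (hadj : ∀ a b : L, β (R a) b = β a (Rs b))
    (hR : ∀ a b : L, ⁅R a, R b⁆ - R ⁅R a, b⁆ - R ⁅a, R b⁆ + ⁅a, b⁆ = 0)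
    (S : L →ₗ[F] L) (hS : S = (1/2 : F) • (R - Rs)) :
    (∀ a b : L, ⁅S a, S b⁆ - S ⁅S a, b⁆ - S ⁅a, S b⁆ + ⁅a, b⁆ = 0) ↔
    (∀ a b : L, ⁅Rs a, Rs b⁆ + R ⁅Rs a, b⁆ + R ⁅a, Rs b⁆ + ⁅a, b⁆ = 0) := by
  have h1 : ∀ x y : L, β (Rs x) y = β x (R y) := fun x y => by
    rw [hsymm (Rs x) y, ← hadj, hsymm]
  have hnd2 : ∀ z : L, (∀ a : L, β a z = 0) → z = 0 := fun z hz =>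
    hnd z (fun b => by rw [hsymm]; exact hz b)
  -- the key pairing identity
  have key : ∀ a b c : L,
      (4 : F) * β (⁅S a, S b⁆ - S ⁅S a, b⁆ - S ⁅a, S b⁆ + ⁅a, b⁆) c
        = β a (⁅Rs b, Rs c⁆ + R ⁅Rs b, c⁆ + R ⁅b, Rs c⁆ + ⁅b, c⁆) := by
    intro a b c
    have f1 : β a (Rs ⁅R b, c⁆) - β a (Rs ⁅b, Rs c⁆) - β a ⁅R b, Rs c⁆ + β a ⁅b, c⁆ = 0 := by
      have h : β (⁅R a, R b⁆ - R ⁅R a, b⁆ - R ⁅a, R b⁆ + ⁅a, b⁆) c = 0 := by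
        rw [hR a b]; simp
      simpa only [map_sub, map_add, LinearMap.sub_apply, LinearMap.add_apply, hinv, hadj] using h
    have f2 : β a ⁅R b, R c⁆ - β a (R ⁅R b, c⁆) - β a (R ⁅b, R c⁆) + β a ⁅b, c⁆ = 0 := by
      have h : β a (⁅R b, R c⁆ - R ⁅R b, c⁆ - R ⁅b, R c⁆ + ⁅b, c⁆) = 0 := by
        rw [hR b c]; simp
      simpa only [map_sub, map_add] using h
    have f3 : β a (Rs ⁅b, R c⁆) - β a ⁅Rs b, R c⁆ - β a (Rs ⁅Rs b, c⁆) + β a ⁅b, c⁆ = 0 := by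
      have e1 : β a (Rs ⁅b, R c⁆) = β b ⁅R c, R a⁆ := by
        rw [hsymm a (Rs ⁅b, R c⁆), h1, hinv]
      have e2 : β a ⁅Rs b, R c⁆ = β b (R ⁅R c, a⁆) := by
        rw [hsymm a ⁅Rs b, R c⁆, hinv, h1]
      have e3 : β a (Rs ⁅Rs b, c⁆) = β b (R ⁅c, R a⁆) := by
        rw [hsymm a (Rs ⁅Rs b, c⁆), h1, hinv, h1]
      have e4 : β a ⁅b, c⁆ = β b ⁅c, a⁆ := by rw [hsymm a ⁅b, c⁆, hinv]
      have h : β b (⁅R c, R a⁆ - R ⁅R c, a⁆ - R ⁅c, R a⁆ + ⁅c, a⁆) = 0 := by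
        rw [hR c a]; simp
      simp only [map_sub, map_add] at h
      rw [e1, e2, e3, e4]
      linear_combination h
    subst hS
    simp only [LinearMap.smul_apply, LinearMap.sub_apply, smul_sub, lie_smul, smul_lie,
      lie_sub, sub_lie, map_sub, map_add, map_smul, LinearMap.add_apply, smul_eq_mul, hinv,
      hadj, h1]
    linear_combination f1 + f2 + f3
  constructor
  · intro H b c
    apply hnd2
    intro a
    have h := key a b c
    rw [H a b] at h
    simpa using h.symm
  · intro H a b
    apply hnd
    intro c
    have h := key a b c
    rw [H b c] at h
    simp only [map_zero] at h
    simp only [map_sub, map_add, LinearMap.sub_apply, LinearMap.add_apply] at h ⊢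
    linear_combination h / 4
end

section
/- Let g be a Lie algebra with a non-degenerate, symmetric, invariant bilinear form ⟨·|·⟩ and let R ∈ End(g), with adjoint R*, satisfy [R*(a),R*(b)] + R([R*(a),b]) + R([a,R*(b)]) + [a,b] = 0 for all a,b. Then ⟨[R*(a),R*(b)]|c⟩ + ⟨[R*(b),R*(c)]|a⟩ + ⟨[R*(c),R*(a)]|b⟩ = −⟨[a,b]|c⟩ for all a,b,c ∈ g. -/
/-- If `R` (with adjoint `Rs` with respect to a non-degenerate, symmetric, invariant
bilinear form `β`) satisfies `[Rs a, Rs b] + R [Rs a, b] + R [a, Rs b] + [a,b] = 0`,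
then the cyclic sum `⟨[Rs a, Rs b]|c⟩ + ⟨[Rs b, Rs c]|a⟩ + ⟨[Rs c, Rs a]|b⟩`
equals `-⟨[a,b]|c⟩`. -/
theorem stmt_5 {F : Type*} [Field F] [CharZero F]
    {L : Type*} [LieRing L] [LieAlgebra F L]
    (β : L →ₗ[F] L →ₗ[F] F)
    (hsymm : ∀ a b : L, β a b = β b a)
    (hnd : ∀ a : L, (∀ b : L, β a b = 0) → a = 0)
    (hinv : ∀ a b c : L, β ⁅a, b⁆ c = β a ⁅b, c⁆)
    (R Rs : L →ₗ[F] L)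
    (hadj : ∀ a b : L, β (R a) b = β a (Rs b))
    (hid : ∀ a b : L, ⁅Rs a, Rs b⁆ + R ⁅Rs a, b⁆ + R ⁅a, Rs b⁆ + ⁅a, b⁆ = 0) :
    ∀ a b c : L,
      β ⁅Rs a, Rs b⁆ c + β ⁅Rs b, Rs c⁆ a + β ⁅Rs c, Rs a⁆ b = - β ⁅a, b⁆ c := by
  intro a b c
  have h : β (⁅Rs a, Rs b⁆ + R ⁅Rs a, b⁆ + R ⁅a, Rs b⁆ + ⁅a, b⁆) c = 0 := by
    rw [hid]; simp
  simp only [map_add, LinearMap.add_apply] at h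
  have h1 : β (R ⁅Rs a, b⁆) c = β ⁅Rs c, Rs a⁆ b := by
    rw [hadj, hinv, hsymm, hinv, hsymm]
  have h2 : β (R ⁅a, Rs b⁆) c = β ⁅Rs b, Rs c⁆ a := by
    rw [hadj, hinv, hsymm]
  rw [h1, h2] at h
  linear_combination h
end

section
/- Let g be a unital associative algebra over a field F of characteristic zero with a trace form Tr. Then for all a,b,c,x ∈ g, the alternating sum over all permutations σ of (a,b,c) of sign(σ)·Tr([x σ(a) x, x σ(b) x] [x, σ(c)]) vanishes, where [y,z] = yz − zy. -/
/-- For a trace functional `Tr` on a unital associative algebra, the alternating sum over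
permutations `σ` of `(a,b,c)` of `sign σ • Tr ([x σ(a) x, x σ(b) x] [x, σ(c)])` vanishes. -/
theorem stmt_8 {F : Type*} [Field F] [CharZero F]
    {g : Type*} [Ring g] [Algebra F g]
    (Tr : g →ₗ[F] F) (hTr : ∀ p q : g, Tr (p * q) = Tr (q * p))
    (a b c x : g) :
    ∑ σ : Equiv.Perm (Fin 3),
      ((Equiv.Perm.sign σ : ℤˣ) : ℤ) •
        Tr (((x * ![a, b, c] (σ 0) * x) * (x * ![a, b, c] (σ 1) * x)
              - (x * ![a, b, c] (σ 1) * x) * (x * ![a, b, c] (σ 0) * x))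
            * (x * ![a, b, c] (σ 2) - ![a, b, c] (σ 2) * x)) = 0 := by
  have key : ∀ u v w : g,
      Tr (((x * u * x) * (x * v * x) - (x * v * x) * (x * u * x)) * (x * w - w * x))
        = Tr (x*(v*(x*(x*(w*(x*(u*x))))))) - Tr (x*(u*(x*(x*(v*(x*(w*x)))))))
          - Tr (x*(u*(x*(x*(w*(x*(v*x))))))) + Tr (x*(v*(x*(x*(u*(x*(w*x))))))) := by
    intro u v w
    have h1 := hTr (x*(u*x)) (x*(v*(x*(x*w))))
    have h3 := hTr (x*(v*x)) (x*(u*(x*(x*w))))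
    simp only [mul_sub, sub_mul, map_sub, map_add, mul_assoc] at *
    linear_combination h1 - h3
  open Equiv in
  have huniv : (Finset.univ : Finset (Equiv.Perm (Fin 3))) =
      {1, swap 0 1, swap 0 2, swap 1 2, swap 0 1 * swap 1 2, swap 1 2 * swap 0 1} := by decide
  open Equiv in
  rw [huniv, Finset.sum_insert (by decide), Finset.sum_insert (by decide),
    Finset.sum_insert (by decide), Finset.sum_insert (by decide),
    Finset.sum_insert (by decide), Finset.sum_singleton]
  open Equiv in
  simp only [show ∀ i : Fin 3, (1 : Equiv.Perm (Fin 3)) i = i from fun _ => rfl,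
    show (swap (0:Fin 3) 1) 0 = 1 by decide, show (swap (0:Fin 3) 1) 1 = 0 by decide,
    show (swap (0:Fin 3) 1) 2 = 2 by decide,
    show (swap (0:Fin 3) 2) 0 = 2 by decide, show (swap (0:Fin 3) 2) 1 = 1 by decide,
    show (swap (0:Fin 3) 2) 2 = 0 by decide,
    show (swap (1:Fin 3) 2) 0 = 0 by decide, show (swap (1:Fin 3) 2) 1 = 2 by decide,
    show (swap (1:Fin 3) 2) 2 = 1 by decide,
    show ((swap 0 1 * swap 1 2 : Equiv.Perm (Fin 3))) 0 = 1 by decide,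
    show ((swap 0 1 * swap 1 2 : Equiv.Perm (Fin 3))) 1 = 2 by decide,
    show ((swap 0 1 * swap 1 2 : Equiv.Perm (Fin 3))) 2 = 0 by decide,
    show ((swap 1 2 * swap 0 1 : Equiv.Perm (Fin 3))) 0 = 2 by decide,
    show ((swap 1 2 * swap 0 1 : Equiv.Perm (Fin 3))) 1 = 0 by decide,
    show ((swap 1 2 * swap 0 1 : Equiv.Perm (Fin 3))) 2 = 1 by decide,
    show Equiv.Perm.sign (1 : Equiv.Perm (Fin 3)) = 1 by decide,
    show Equiv.Perm.sign (swap (0:Fin 3) 1) = -1 by decide,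
    show Equiv.Perm.sign (swap (0:Fin 3) 2) = -1 by decide,
    show Equiv.Perm.sign (swap (1:Fin 3) 2) = -1 by decide,
    show Equiv.Perm.sign (swap (0:Fin 3) 1 * swap 1 2) = 1 by decide,
    show Equiv.Perm.sign (swap (1:Fin 3) 2 * swap 0 1) = 1 by decide,
    Matrix.cons_val_zero, Matrix.cons_val_one, Matrix.head_cons,
    Matrix.cons_val_two, Matrix.tail_cons, Units.val_one, Units.val_neg, one_smul, neg_smul]
  simp only [key]
  ring
end

section
/- Let g be a unital associative algebra over a field F of characteristic zero with a trace form Tr. Then for all a,b,c,x ∈ g: (1/2)∑_σ sign(σ) Tr([x σ(a) + σ(a) x, x σ(b) + σ(b) x][x, σ(c)]) = −Tr([[x,a],[x,b]][x,c]), where the sum ranges over all permutations σ of (a,b,c) and [y,z] = yz − zy. -/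
set_option maxHeartbeats 4000000 in
/-- For a trace functional `Tr` on a unital associative algebra,
`(1/2) ∑_σ sign σ • Tr ([x σ(a) + σ(a) x, x σ(b) + σ(b) x] [x, σ(c)])
  = - Tr ([[x,a],[x,b]] [x,c])`. -/
theorem stmt_9 {F : Type*} [Field F] [CharZero F]
    {g : Type*} [Ring g] [Algebra F g]
    (Tr : g →ₗ[F] F) (hTr : ∀ p q : g, Tr (p * q) = Tr (q * p))
    (a b c x : g) :
    (1 / 2 : F) *
      ∑ σ : Equiv.Perm (Fin 3),
        ((Equiv.Perm.sign σ : ℤˣ) : ℤ) •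
          Tr (((x * ![a, b, c] (σ 0) + ![a, b, c] (σ 0) * x)
                  * (x * ![a, b, c] (σ 1) + ![a, b, c] (σ 1) * x)
                - (x * ![a, b, c] (σ 1) + ![a, b, c] (σ 1) * x)
                  * (x * ![a, b, c] (σ 0) + ![a, b, c] (σ 0) * x))
              * (x * ![a, b, c] (σ 2) - ![a, b, c] (σ 2) * x))
      = - Tr (((x * a - a * x) * (x * b - b * x) - (x * b - b * x) * (x * a - a * x))
              * (x * c - c * x)) := by
  have huniv : (Finset.univ : Finset (Equiv.Perm (Fin 3))) = {1, Equiv.swap 0 1, Equiv.swap 0 2, Equiv.swap 1 2, Equiv.swap 0 1 * Equiv.swap 0 2, Equiv.swap 0 1 * Equiv.swap 1 2} := by decide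
  rw [huniv, Finset.sum_insert (by decide), Finset.sum_insert (by decide),
    Finset.sum_insert (by decide), Finset.sum_insert (by decide),
    Finset.sum_insert (by decide), Finset.sum_singleton]
  have e20 : (Equiv.swap (0:Fin 3) 1) 0 = 1 := by decide
  have e21 : (Equiv.swap (0:Fin 3) 1) 1 = 0 := by decide
  have e22 : (Equiv.swap (0:Fin 3) 1) 2 = 2 := by decide
  have e30 : (Equiv.swap (0:Fin 3) 2) 0 = 2 := by decide
  have e31 : (Equiv.swap (0:Fin 3) 2) 1 = 1 := by decide
  have e32 : (Equiv.swap (0:Fin 3) 2) 2 = 0 := by decide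
  have e40 : (Equiv.swap (1:Fin 3) 2) 0 = 0 := by decide
  have e41 : (Equiv.swap (1:Fin 3) 2) 1 = 2 := by decide
  have e42 : (Equiv.swap (1:Fin 3) 2) 2 = 1 := by decide
  have e50 : (Equiv.swap (0:Fin 3) 1 * Equiv.swap 0 2 : Equiv.Perm (Fin 3)) 0 = 2 := by decide
  have e51 : (Equiv.swap (0:Fin 3) 1 * Equiv.swap 0 2 : Equiv.Perm (Fin 3)) 1 = 0 := by decide
  have e52 : (Equiv.swap (0:Fin 3) 1 * Equiv.swap 0 2 : Equiv.Perm (Fin 3)) 2 = 1 := by decide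
  have e60 : (Equiv.swap (0:Fin 3) 1 * Equiv.swap 1 2 : Equiv.Perm (Fin 3)) 0 = 1 := by decide
  have e61 : (Equiv.swap (0:Fin 3) 1 * Equiv.swap 1 2 : Equiv.Perm (Fin 3)) 1 = 2 := by decide
  have e62 : (Equiv.swap (0:Fin 3) 1 * Equiv.swap 1 2 : Equiv.Perm (Fin 3)) 2 = 0 := by decide
  have s2 : Equiv.Perm.sign (Equiv.swap (0:Fin 3) 1) = -1 := by decide
  have s3 : Equiv.Perm.sign (Equiv.swap (0:Fin 3) 2) = -1 := by decide
  have s4 : Equiv.Perm.sign (Equiv.swap (1:Fin 3) 2) = -1 := by decide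
  have s5 : Equiv.Perm.sign (Equiv.swap (0:Fin 3) 1 * Equiv.swap 0 2 : Equiv.Perm (Fin 3)) = 1 := by decide
  have s6 : Equiv.Perm.sign (Equiv.swap (0:Fin 3) 1 * Equiv.swap 1 2 : Equiv.Perm (Fin 3)) = 1 := by decide
  simp only [e20, e21, e22, e30, e31, e32, e40, e41, e42, e50, e51, e52, e60, e61, e62,
    s2, s3, s4, s5, s6, Equiv.Perm.sign_one, Equiv.Perm.one_apply,
    Matrix.cons_val_zero, Matrix.cons_val_one, Matrix.head_cons, Matrix.cons_val_two,
    Matrix.tail_cons, Units.val_one, Units.val_neg, Int.cast_one, one_smul, neg_smul]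
  have hE1 : (((x * a + a * x) * (x * b + b * x) - (x * b + b * x) * (x * a + a * x)) * (x * c - c * x) : g) = -a * (x * (b * (x * (c * (x))))) + a * (x * (b * (x * (x * (c))))) - a * (x * (x * (b * (c * (x))))) + a * (x * (x * (b * (x * (c))))) + b * (x * (a * (x * (c * (x))))) - b * (x * (a * (x * (x * (c))))) + b * (x * (x * (a * (c * (x))))) - b * (x * (x * (a * (x * (c))))) - x * (a * (b * (x * (c * (x))))) + x * (a * (b * (x * (x * (c))))) - x * (a * (x * (b * (c * (x))))) + x * (a * (x * (b * (x * (c))))) + x * (b * (a * (x * (c * (x))))) - x * (b * (a * (x * (x * (c))))) + x * (b * (x * (a * (c * (x))))) - x * (b * (x * (a * (x * (c))))) := by noncomm_ring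
  have hE2 : (((x * b + b * x) * (x * a + a * x) - (x * a + a * x) * (x * b + b * x)) * (x * c - c * x) : g) = a * (x * (b * (x * (c * (x))))) - a * (x * (b * (x * (x * (c))))) + a * (x * (x * (b * (c * (x))))) - a * (x * (x * (b * (x * (c))))) - b * (x * (a * (x * (c * (x))))) + b * (x * (a * (x * (x * (c))))) - b * (x * (x * (a * (c * (x))))) + b * (x * (x * (a * (x * (c))))) + x * (a * (b * (x * (c * (x))))) - x * (a * (b * (x * (x * (c))))) + x * (a * (x * (b * (c * (x))))) - x * (a * (x * (b * (x * (c))))) - x * (b * (a * (x * (c * (x))))) + x * (b * (a * (x * (x * (c))))) - x * (b * (x * (a * (c * (x))))) + x * (b * (x * (a * (x * (c))))) := by noncomm_ring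
  have hE3 : (((x * c + c * x) * (x * b + b * x) - (x * b + b * x) * (x * c + c * x)) * (x * a - a * x) : g) = b * (x * (c * (x * (a * (x))))) - b * (x * (c * (x * (x * (a))))) + b * (x * (x * (c * (a * (x))))) - b * (x * (x * (c * (x * (a))))) - c * (x * (b * (x * (a * (x))))) + c * (x * (b * (x * (x * (a))))) - c * (x * (x * (b * (a * (x))))) + c * (x * (x * (b * (x * (a))))) + x * (b * (c * (x * (a * (x))))) - x * (b * (c * (x * (x * (a))))) + x * (b * (x * (c * (a * (x))))) - x * (b * (x * (c * (x * (a))))) - x * (c * (b * (x * (a * (x))))) + x * (c * (b * (x * (x * (a))))) - x * (c * (x * (b * (a * (x))))) + x * (c * (x * (b * (x * (a))))) := by noncomm_ring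
  have hE4 : (((x * a + a * x) * (x * c + c * x) - (x * c + c * x) * (x * a + a * x)) * (x * b - b * x) : g) = -a * (x * (c * (x * (b * (x))))) + a * (x * (c * (x * (x * (b))))) - a * (x * (x * (c * (b * (x))))) + a * (x * (x * (c * (x * (b))))) + c * (x * (a * (x * (b * (x))))) - c * (x * (a * (x * (x * (b))))) + c * (x * (x * (a * (b * (x))))) - c * (x * (x * (a * (x * (b))))) - x * (a * (c * (x * (b * (x))))) + x * (a * (c * (x * (x * (b))))) - x * (a * (x * (c * (b * (x))))) + x * (a * (x * (c * (x * (b))))) + x * (c * (a * (x * (b * (x))))) - x * (c * (a * (x * (x * (b))))) + x * (c * (x * (a * (b * (x))))) - x * (c * (x * (a * (x * (b))))) := by noncomm_ring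
  have hE5 : (((x * c + c * x) * (x * a + a * x) - (x * a + a * x) * (x * c + c * x)) * (x * b - b * x) : g) = a * (x * (c * (x * (b * (x))))) - a * (x * (c * (x * (x * (b))))) + a * (x * (x * (c * (b * (x))))) - a * (x * (x * (c * (x * (b))))) - c * (x * (a * (x * (b * (x))))) + c * (x * (a * (x * (x * (b))))) - c * (x * (x * (a * (b * (x))))) + c * (x * (x * (a * (x * (b))))) + x * (a * (c * (x * (b * (x))))) - x * (a * (c * (x * (x * (b))))) + x * (a * (x * (c * (b * (x))))) - x * (a * (x * (c * (x * (b))))) - x * (c * (a * (x * (b * (x))))) + x * (c * (a * (x * (x * (b))))) - x * (c * (x * (a * (b * (x))))) + x * (c * (x * (a * (x * (b))))) := by noncomm_ring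
  have hE6 : (((x * b + b * x) * (x * c + c * x) - (x * c + c * x) * (x * b + b * x)) * (x * a - a * x) : g) = -b * (x * (c * (x * (a * (x))))) + b * (x * (c * (x * (x * (a))))) - b * (x * (x * (c * (a * (x))))) + b * (x * (x * (c * (x * (a))))) + c * (x * (b * (x * (a * (x))))) - c * (x * (b * (x * (x * (a))))) + c * (x * (x * (b * (a * (x))))) - c * (x * (x * (b * (x * (a))))) - x * (b * (c * (x * (a * (x))))) + x * (b * (c * (x * (x * (a))))) - x * (b * (x * (c * (a * (x))))) + x * (b * (x * (c * (x * (a))))) + x * (c * (b * (x * (a * (x))))) - x * (c * (b * (x * (x * (a))))) + x * (c * (x * (b * (a * (x))))) - x * (c * (x * (b * (x * (a))))) := by noncomm_ring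
  have hE7 : (((x * a - a * x) * (x * b - b * x) - (x * b - b * x) * (x * a - a * x)) * (x * c - c * x) : g) = -a * (x * (b * (x * (c * (x))))) + a * (x * (b * (x * (x * (c))))) + a * (x * (x * (b * (c * (x))))) - a * (x * (x * (b * (x * (c))))) + b * (x * (a * (x * (c * (x))))) - b * (x * (a * (x * (x * (c))))) - b * (x * (x * (a * (c * (x))))) + b * (x * (x * (a * (x * (c))))) + x * (a * (b * (x * (c * (x))))) - x * (a * (b * (x * (x * (c))))) - x * (a * (x * (b * (c * (x))))) + x * (a * (x * (b * (x * (c))))) - x * (b * (a * (x * (c * (x))))) + x * (b * (a * (x * (x * (c))))) + x * (b * (x * (a * (c * (x))))) - x * (b * (x * (a * (x * (c))))) := by noncomm_ring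
  have h1 : Tr (b * (x * (a * (x * (c * (x)))))) = Tr (a * (x * (c * (x * (b * (x)))))) := by
    rw [show (b * (x * (a * (x * (c * (x))))) : g) = (b * (x)) * (a * (x * (c * (x)))) from by noncomm_ring, hTr, show ((a * (x * (c * (x)))) * (b * (x)) : g) = a * (x * (c * (x * (b * (x))))) from by noncomm_ring]
  have h2 : Tr (b * (x * (a * (x * (x * (c)))))) = Tr (a * (x * (x * (c * (b * (x)))))) := by
    rw [show (b * (x * (a * (x * (x * (c))))) : g) = (b * (x)) * (a * (x * (x * (c)))) from by noncomm_ring, hTr, show ((a * (x * (x * (c)))) * (b * (x)) : g) = a * (x * (x * (c * (b * (x))))) from by noncomm_ring]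
  have h3 : Tr (b * (x * (c * (x * (a * (x)))))) = Tr (a * (x * (b * (x * (c * (x)))))) := by
    rw [show (b * (x * (c * (x * (a * (x))))) : g) = (b * (x * (c * (x)))) * (a * (x)) from by noncomm_ring, hTr, show ((a * (x)) * (b * (x * (c * (x)))) : g) = a * (x * (b * (x * (c * (x))))) from by noncomm_ring]
  have h4 : Tr (b * (x * (c * (x * (x * (a)))))) = Tr (a * (b * (x * (c * (x * (x)))))) := by
    rw [show (b * (x * (c * (x * (x * (a))))) : g) = (b * (x * (c * (x * (x))))) * (a) from by noncomm_ring, hTr, show ((a) * (b * (x * (c * (x * (x))))) : g) = a * (b * (x * (c * (x * (x))))) from by noncomm_ring]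
  have h5 : Tr (b * (x * (x * (c * (a * (x)))))) = Tr (a * (x * (b * (x * (x * (c)))))) := by
    rw [show (b * (x * (x * (c * (a * (x))))) : g) = (b * (x * (x * (c)))) * (a * (x)) from by noncomm_ring, hTr, show ((a * (x)) * (b * (x * (x * (c)))) : g) = a * (x * (b * (x * (x * (c))))) from by noncomm_ring]
  have h6 : Tr (b * (x * (x * (c * (x * (a)))))) = Tr (a * (b * (x * (x * (c * (x)))))) := by
    rw [show (b * (x * (x * (c * (x * (a))))) : g) = (b * (x * (x * (c * (x))))) * (a) from by noncomm_ring, hTr, show ((a) * (b * (x * (x * (c * (x))))) : g) = a * (b * (x * (x * (c * (x))))) from by noncomm_ring]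
  have h7 : Tr (c * (x * (a * (x * (b * (x)))))) = Tr (a * (x * (b * (x * (c * (x)))))) := by
    rw [show (c * (x * (a * (x * (b * (x))))) : g) = (c * (x)) * (a * (x * (b * (x)))) from by noncomm_ring, hTr, show ((a * (x * (b * (x)))) * (c * (x)) : g) = a * (x * (b * (x * (c * (x))))) from by noncomm_ring]
  have h8 : Tr (c * (x * (a * (x * (x * (b)))))) = Tr (a * (x * (x * (b * (c * (x)))))) := by
    rw [show (c * (x * (a * (x * (x * (b))))) : g) = (c * (x)) * (a * (x * (x * (b)))) from by noncomm_ring, hTr, show ((a * (x * (x * (b)))) * (c * (x)) : g) = a * (x * (x * (b * (c * (x))))) from by noncomm_ring]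
  have h9 : Tr (c * (x * (b * (x * (a * (x)))))) = Tr (a * (x * (c * (x * (b * (x)))))) := by
    rw [show (c * (x * (b * (x * (a * (x))))) : g) = (c * (x * (b * (x)))) * (a * (x)) from by noncomm_ring, hTr, show ((a * (x)) * (c * (x * (b * (x)))) : g) = a * (x * (c * (x * (b * (x))))) from by noncomm_ring]
  have h10 : Tr (c * (x * (b * (x * (x * (a)))))) = Tr (a * (c * (x * (b * (x * (x)))))) := by
    rw [show (c * (x * (b * (x * (x * (a))))) : g) = (c * (x * (b * (x * (x))))) * (a) from by noncomm_ring, hTr, show ((a) * (c * (x * (b * (x * (x))))) : g) = a * (c * (x * (b * (x * (x))))) from by noncomm_ring]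
  have h11 : Tr (c * (x * (x * (a * (b * (x)))))) = Tr (a * (b * (x * (c * (x * (x)))))) := by
    rw [show (c * (x * (x * (a * (b * (x))))) : g) = (c * (x * (x))) * (a * (b * (x))) from by noncomm_ring, hTr, show ((a * (b * (x))) * (c * (x * (x))) : g) = a * (b * (x * (c * (x * (x))))) from by noncomm_ring]
  have h12 : Tr (c * (x * (x * (a * (x * (b)))))) = Tr (a * (x * (b * (c * (x * (x)))))) := by
    rw [show (c * (x * (x * (a * (x * (b))))) : g) = (c * (x * (x))) * (a * (x * (b))) from by noncomm_ring, hTr, show ((a * (x * (b))) * (c * (x * (x))) : g) = a * (x * (b * (c * (x * (x))))) from by noncomm_ring]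
  have h13 : Tr (c * (x * (x * (b * (a * (x)))))) = Tr (a * (x * (c * (x * (x * (b)))))) := by
    rw [show (c * (x * (x * (b * (a * (x))))) : g) = (c * (x * (x * (b)))) * (a * (x)) from by noncomm_ring, hTr, show ((a * (x)) * (c * (x * (x * (b)))) : g) = a * (x * (c * (x * (x * (b))))) from by noncomm_ring]
  have h14 : Tr (c * (x * (x * (b * (x * (a)))))) = Tr (a * (c * (x * (x * (b * (x)))))) := by
    rw [show (c * (x * (x * (b * (x * (a))))) : g) = (c * (x * (x * (b * (x))))) * (a) from by noncomm_ring, hTr, show ((a) * (c * (x * (x * (b * (x))))) : g) = a * (c * (x * (x * (b * (x))))) from by noncomm_ring]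
  have h15 : Tr (x * (a * (c * (x * (b * (x)))))) = Tr (a * (c * (x * (b * (x * (x)))))) := by
    rw [show (x * (a * (c * (x * (b * (x))))) : g) = (x) * (a * (c * (x * (b * (x))))) from by noncomm_ring, hTr, show ((a * (c * (x * (b * (x))))) * (x) : g) = a * (c * (x * (b * (x * (x))))) from by noncomm_ring]
  have h16 : Tr (x * (a * (c * (x * (x * (b)))))) = Tr (a * (c * (x * (x * (b * (x)))))) := by
    rw [show (x * (a * (c * (x * (x * (b))))) : g) = (x) * (a * (c * (x * (x * (b))))) from by noncomm_ring, hTr, show ((a * (c * (x * (x * (b))))) * (x) : g) = a * (c * (x * (x * (b * (x))))) from by noncomm_ring]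
  have h17 : Tr (x * (a * (x * (b * (c * (x)))))) = Tr (a * (x * (b * (c * (x * (x)))))) := by
    rw [show (x * (a * (x * (b * (c * (x))))) : g) = (x) * (a * (x * (b * (c * (x))))) from by noncomm_ring, hTr, show ((a * (x * (b * (c * (x))))) * (x) : g) = a * (x * (b * (c * (x * (x))))) from by noncomm_ring]
  have h18 : Tr (x * (a * (x * (b * (x * (c)))))) = Tr (a * (x * (b * (x * (c * (x)))))) := by
    rw [show (x * (a * (x * (b * (x * (c))))) : g) = (x) * (a * (x * (b * (x * (c))))) from by noncomm_ring, hTr, show ((a * (x * (b * (x * (c))))) * (x) : g) = a * (x * (b * (x * (c * (x))))) from by noncomm_ring]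
  have h19 : Tr (x * (a * (x * (c * (b * (x)))))) = Tr (a * (x * (c * (b * (x * (x)))))) := by
    rw [show (x * (a * (x * (c * (b * (x))))) : g) = (x) * (a * (x * (c * (b * (x))))) from by noncomm_ring, hTr, show ((a * (x * (c * (b * (x))))) * (x) : g) = a * (x * (c * (b * (x * (x))))) from by noncomm_ring]
  have h20 : Tr (x * (a * (x * (c * (x * (b)))))) = Tr (a * (x * (c * (x * (b * (x)))))) := by
    rw [show (x * (a * (x * (c * (x * (b))))) : g) = (x) * (a * (x * (c * (x * (b))))) from by noncomm_ring, hTr, show ((a * (x * (c * (x * (b))))) * (x) : g) = a * (x * (c * (x * (b * (x))))) from by noncomm_ring]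
  have h21 : Tr (x * (b * (c * (x * (a * (x)))))) = Tr (a * (x * (x * (b * (c * (x)))))) := by
    rw [show (x * (b * (c * (x * (a * (x))))) : g) = (x * (b * (c * (x)))) * (a * (x)) from by noncomm_ring, hTr, show ((a * (x)) * (x * (b * (c * (x)))) : g) = a * (x * (x * (b * (c * (x))))) from by noncomm_ring]
  have h22 : Tr (x * (b * (c * (x * (x * (a)))))) = Tr (a * (x * (b * (c * (x * (x)))))) := by
    rw [show (x * (b * (c * (x * (x * (a))))) : g) = (x * (b * (c * (x * (x))))) * (a) from by noncomm_ring, hTr, show ((a) * (x * (b * (c * (x * (x))))) : g) = a * (x * (b * (c * (x * (x))))) from by noncomm_ring]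
  have h23 : Tr (x * (b * (x * (a * (c * (x)))))) = Tr (a * (c * (x * (x * (b * (x)))))) := by
    rw [show (x * (b * (x * (a * (c * (x))))) : g) = (x * (b * (x))) * (a * (c * (x))) from by noncomm_ring, hTr, show ((a * (c * (x))) * (x * (b * (x))) : g) = a * (c * (x * (x * (b * (x))))) from by noncomm_ring]
  have h24 : Tr (x * (b * (x * (a * (x * (c)))))) = Tr (a * (x * (c * (x * (b * (x)))))) := by
    rw [show (x * (b * (x * (a * (x * (c))))) : g) = (x * (b * (x))) * (a * (x * (c))) from by noncomm_ring, hTr, show ((a * (x * (c))) * (x * (b * (x))) : g) = a * (x * (c * (x * (b * (x))))) from by noncomm_ring]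
  have h25 : Tr (x * (b * (x * (c * (a * (x)))))) = Tr (a * (x * (x * (b * (x * (c)))))) := by
    rw [show (x * (b * (x * (c * (a * (x))))) : g) = (x * (b * (x * (c)))) * (a * (x)) from by noncomm_ring, hTr, show ((a * (x)) * (x * (b * (x * (c)))) : g) = a * (x * (x * (b * (x * (c))))) from by noncomm_ring]
  have h26 : Tr (x * (b * (x * (c * (x * (a)))))) = Tr (a * (x * (b * (x * (c * (x)))))) := by
    rw [show (x * (b * (x * (c * (x * (a))))) : g) = (x * (b * (x * (c * (x))))) * (a) from by noncomm_ring, hTr, show ((a) * (x * (b * (x * (c * (x))))) : g) = a * (x * (b * (x * (c * (x))))) from by noncomm_ring]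
  have h27 : Tr (x * (c * (a * (x * (b * (x)))))) = Tr (a * (x * (b * (x * (x * (c)))))) := by
    rw [show (x * (c * (a * (x * (b * (x))))) : g) = (x * (c)) * (a * (x * (b * (x)))) from by noncomm_ring, hTr, show ((a * (x * (b * (x)))) * (x * (c)) : g) = a * (x * (b * (x * (x * (c))))) from by noncomm_ring]
  have h28 : Tr (x * (c * (a * (x * (x * (b)))))) = Tr (a * (x * (x * (b * (x * (c)))))) := by
    rw [show (x * (c * (a * (x * (x * (b))))) : g) = (x * (c)) * (a * (x * (x * (b)))) from by noncomm_ring, hTr, show ((a * (x * (x * (b)))) * (x * (c)) : g) = a * (x * (x * (b * (x * (c))))) from by noncomm_ring]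
  have h29 : Tr (x * (c * (b * (x * (a * (x)))))) = Tr (a * (x * (x * (c * (b * (x)))))) := by
    rw [show (x * (c * (b * (x * (a * (x))))) : g) = (x * (c * (b * (x)))) * (a * (x)) from by noncomm_ring, hTr, show ((a * (x)) * (x * (c * (b * (x)))) : g) = a * (x * (x * (c * (b * (x))))) from by noncomm_ring]
  have h30 : Tr (x * (c * (b * (x * (x * (a)))))) = Tr (a * (x * (c * (b * (x * (x)))))) := by
    rw [show (x * (c * (b * (x * (x * (a))))) : g) = (x * (c * (b * (x * (x))))) * (a) from by noncomm_ring, hTr, show ((a) * (x * (c * (b * (x * (x))))) : g) = a * (x * (c * (b * (x * (x))))) from by noncomm_ring]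
  have h31 : Tr (x * (c * (x * (a * (b * (x)))))) = Tr (a * (b * (x * (x * (c * (x)))))) := by
    rw [show (x * (c * (x * (a * (b * (x))))) : g) = (x * (c * (x))) * (a * (b * (x))) from by noncomm_ring, hTr, show ((a * (b * (x))) * (x * (c * (x))) : g) = a * (b * (x * (x * (c * (x))))) from by noncomm_ring]
  have h32 : Tr (x * (c * (x * (a * (x * (b)))))) = Tr (a * (x * (b * (x * (c * (x)))))) := by
    rw [show (x * (c * (x * (a * (x * (b))))) : g) = (x * (c * (x))) * (a * (x * (b))) from by noncomm_ring, hTr, show ((a * (x * (b))) * (x * (c * (x))) : g) = a * (x * (b * (x * (c * (x))))) from by noncomm_ring]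
  have h33 : Tr (x * (c * (x * (b * (a * (x)))))) = Tr (a * (x * (x * (c * (x * (b)))))) := by
    rw [show (x * (c * (x * (b * (a * (x))))) : g) = (x * (c * (x * (b)))) * (a * (x)) from by noncomm_ring, hTr, show ((a * (x)) * (x * (c * (x * (b)))) : g) = a * (x * (x * (c * (x * (b))))) from by noncomm_ring]
  have h34 : Tr (x * (c * (x * (b * (x * (a)))))) = Tr (a * (x * (c * (x * (b * (x)))))) := by
    rw [show (x * (c * (x * (b * (x * (a))))) : g) = (x * (c * (x * (b * (x))))) * (a) from by noncomm_ring, hTr, show ((a) * (x * (c * (x * (b * (x))))) : g) = a * (x * (c * (x * (b * (x))))) from by noncomm_ring]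
  rw [hE1, hE2, hE3, hE4, hE5, hE6, hE7]
  simp only [neg_mul, map_add, map_sub, map_neg]
  linear_combination (2 : F) * h1 + (-2 : F) * h2 + (-1 : F) * h3 + (1 : F) * h4 + (-1 : F) * h5 + (1 : F) * h6 + (-1 : F) * h7 + (1 : F) * h8 + (1 : F) * h9 + (-1 : F) * h10 + (-1 : F) * h11 + (1 : F) * h12 + (1 : F) * h13 + (-1 : F) * h14 + (1 : F) * h15 + (-1 : F) * h16 + (-2 : F) * h17 + (2 : F) * h18 + (1 : F) * h19 + (-1 : F) * h20 + (-1 : F) * h21 + (1 : F) * h22 + (2 : F) * h23 + (-2 : F) * h24 + (-1 : F) * h25 + (1 : F) * h26 + (-1 : F) * h27 + (1 : F) * h28 + (1 : F) * h29 + (-1 : F) * h30 + (-1 : F) * h31 + (1 : F) * h32 + (1 : F) * h33 + (-1 : F) * h34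
end

section
/- Let g be a finite dimensional unital associative algebra over a field F of characteristic zero with a non-degenerate trace form Tr, and let R ∈ End(g) satisfy the modified Yang–Baxter equation for the commutator Lie bracket. For x ∈ g define P(a,b,c) := ∑_σ sign(σ)[ Tr(x[σ(b), R(x R*([x,σ(a)]) x σ(c) x)]) + Tr(x[σ(b), R([x,R(x σ(a) x)] σ(c) x)]) + Tr(x[σ(b), R(x σ(c) x R*([x,σ(a)]) x)]) + Tr(x[σ(b), R(x σ(c) [x,R(x σ(a) x)])]) + Tr(x[σ(a), R(x [σ(b), R(x σ(c) x)] x)]) − Tr(x[[σ(b), R(x σ(c) x)], R(x σ(a) x)]) ]. Then P(a,b,c) = 0 for all a,b,c,x ∈ g. -/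
/-- The sum of six trace terms appearing in the proof of the Jacobi identity for the
Oevel–Ragnisco brackets, for fixed `x` and a triple `(A', B', C')`. -/
noncomputable def stmt10aux {F : Type*} [Field F] {g : Type*} [Ring g] [Algebra F g]
    (Tr : g →ₗ[F] F) (R Rs : g →ₗ[F] g) (x A' B' C' : g) : F :=
  Tr (x * (B' * R (x * Rs (x * A' - A' * x) * x * C' * x)
          - R (x * Rs (x * A' - A' * x) * x * C' * x) * B'))
  + Tr (x * (B' * R ((x * R (x * A' * x) - R (x * A' * x) * x) * C' * x)
          - R ((x * R (x * A' * x) - R (x * A' * x) * x) * C' * x) * B'))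
  + Tr (x * (B' * R (x * C' * x * Rs (x * A' - A' * x) * x)
          - R (x * C' * x * Rs (x * A' - A' * x) * x) * B'))
  + Tr (x * (B' * R (x * C' * (x * R (x * A' * x) - R (x * A' * x) * x))
          - R (x * C' * (x * R (x * A' * x) - R (x * A' * x) * x)) * B'))
  + Tr (x * (A' * R (x * (B' * R (x * C' * x) - R (x * C' * x) * B') * x)
          - R (x * (B' * R (x * C' * x) - R (x * C' * x) * B') * x) * A'))
  - Tr (x * ((B' * R (x * C' * x) - R (x * C' * x) * B') * R (x * A' * x)
          - R (x * A' * x) * (B' * R (x * C' * x) - R (x * C' * x) * B')))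

set_option maxHeartbeats 2000000 in
/-- For a finite dimensional unital associative algebra with non-degenerate trace form,
an `R`-matrix `R` (with adjoint `Rs`), the alternating permutation sum `P(a,b,c)` of the
six trace terms vanishes. -/
theorem stmt_10 {F : Type*} [Field F] [CharZero F]
    {g : Type*} [Ring g] [Algebra F g] [FiniteDimensional F g]
    (Tr : g →ₗ[F] F)
    (hTrc : ∀ p q : g, Tr (p * q - q * p) = 0)
    (hTrnd : ∀ p : g, (∀ q : g, Tr (p * q) = 0) → p = 0)
    (R Rs : g →ₗ[F] g)
    (hadj : ∀ p q : g, Tr (R p * q) = Tr (p * Rs q))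
    (hR : ∀ p q : g, (R p * R q - R q * R p) - R (R p * q - q * R p)
          - R (p * R q - R q * p) + (p * q - q * p) = 0)
    (a b c x : g) :
    ∑ σ : Equiv.Perm (Fin 3),
      ((Equiv.Perm.sign σ : ℤˣ) : ℤ) •
        stmt10aux Tr R Rs x (![a, b, c] (σ 0)) (![a, b, c] (σ 1)) (![a, b, c] (σ 2))
      = 0 := by
  have hTrc' : ∀ p q : g, Tr (p * q) = Tr (q * p) := by
    intro p q
    have h := hTrc p q
    rw [map_sub] at h
    linear_combination h
  have hY : ∀ p q u : g,
      Tr (R p * (R q * u)) - Tr (R q * (R p * u)) - Tr (R (R p * q) * u) + Tr (R (q * R p) * u)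
        - Tr (R (p * R q) * u) + Tr (R (R q * p) * u) + Tr (p * (q * u)) - Tr (q * (p * u))
        = 0 := by
    intro p q u
    have h := congrArg (fun z => Tr (z * u)) (hR p q)
    simp only [sub_mul, add_mul, zero_mul, map_sub, map_add, map_zero, mul_assoc] at h
    linear_combination h
  rw [show (Finset.univ : Finset (Equiv.Perm (Fin 3))) =
      {1, Equiv.swap 0 1, Equiv.swap 0 2, Equiv.swap 1 2, Equiv.swap 0 1 * Equiv.swap 0 2, Equiv.swap 0 2 * Equiv.swap 0 1} from by decide]
  rw [Finset.sum_insert (by decide), Finset.sum_insert (by decide),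
      Finset.sum_insert (by decide), Finset.sum_insert (by decide),
      Finset.sum_insert (by decide), Finset.sum_singleton]
  simp only [show ((Equiv.swap 0 1 : Equiv.Perm (Fin 3))) 0 = 1 from by decide, show ((Equiv.swap 0 1 : Equiv.Perm (Fin 3))) 1 = 0 from by decide, show ((Equiv.swap 0 1 : Equiv.Perm (Fin 3))) 2 = 2 from by decide, show ((Equiv.swap 0 2 : Equiv.Perm (Fin 3))) 0 = 2 from by decide, show ((Equiv.swap 0 2 : Equiv.Perm (Fin 3))) 1 = 1 from by decide, show ((Equiv.swap 0 2 : Equiv.Perm (Fin 3))) 2 = 0 from by decide, show ((Equiv.swap 1 2 : Equiv.Perm (Fin 3))) 0 = 0 from by decide, show ((Equiv.swap 1 2 : Equiv.Perm (Fin 3))) 1 = 2 from by decide, show ((Equiv.swap 1 2 : Equiv.Perm (Fin 3))) 2 = 1 from by decide, show ((Equiv.swap 0 1 * Equiv.swap 0 2 : Equiv.Perm (Fin 3))) 0 = 2 from by decide, show ((Equiv.swap 0 1 * Equiv.swap 0 2 : Equiv.Perm (Fin 3))) 1 = 0 from by decide, show ((Equiv.swap 0 1 * Equiv.swap 0 2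 : Equiv.Perm (Fin 3))) 2 = 1 from by decide, show ((Equiv.swap 0 2 * Equiv.swap 0 1 : Equiv.Perm (Fin 3))) 0 = 1 from by decide, show ((Equiv.swap 0 2 * Equiv.swap 0 1 : Equiv.Perm (Fin 3))) 1 = 2 from by decide, show ((Equiv.swap 0 2 * Equiv.swap 0 1 : Equiv.Perm (Fin 3))) 2 = 0 from by decide, show Equiv.Perm.sign ((Equiv.swap 0 1 : Equiv.Perm (Fin 3))) = -1 from by decide, show Equiv.Perm.sign ((Equiv.swap 0 2 : Equiv.Perm (Fin 3))) = -1 from by decide, show Equiv.Perm.sign ((Equiv.swap 1 2 : Equiv.Perm (Fin 3))) = -1 from by decide, show Equiv.Perm.sign ((Equiv.swap 0 1 * Equiv.swap 0 2 : Equiv.Perm (Fin 3))) = 1 from by decide, show Equiv.Perm.sign ((Equiv.swap 0 2 * Equiv.swap 0 1 : Equiv.Perm (Fin 3))) = 1 from by decide,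
    Equiv.Perm.sign_one, Equiv.Perm.coe_one, id_eq,
    Matrix.cons_val_zero, Matrix.cons_val_one, Matrix.cons_val_two, Matrix.head_cons,
    Matrix.tail_cons, Units.val_one, Units.val_neg, one_smul, neg_smul]
  simp only [stmt10aux, map_sub, map_add, sub_mul, mul_sub, add_mul, mul_add, mul_assoc]
  have hh1 := hY (x * (b * (x))) (x * (c * (x))) (a * (x))
  have hh2 := hY (x * (b * (x))) (x * (a * (x))) (c * (x))
  have hh3 := hY (x * (b * (x))) (x * (a * (x))) (x * (c))
  have hh4 := hY (x * (a * (x))) (x * (c * (x))) (b * (x))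
  have hh5 := hY (x * (c * (x))) (x * (a * (x))) (x * (b))
  have hh6 := hY (x * (c * (x))) (x * (b * (x))) (x * (a))
  have hh7 := hTrc' (x * (b)) (R (x * (Rs (x * (a)) * (x * (c * (x))))))
  have hh8 := hTrc' (x * (Rs (x * (a)) * (x))) (c * (x * (Rs (x * (b)))))
  have hh9 := hTrc' (x * (b)) (R (x * (Rs (a * (x)) * (x * (c * (x))))))
  have hh10 := hTrc' (x * (Rs (a * (x)) * (x))) (c * (x * (Rs (x * (b)))))
  have hh11 := hTrc' (x) (R (x * (Rs (x * (a)) * (x * (c * (x))))) * (b))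
  have hh12 := hTrc' (x * (Rs (x * (a)) * (x))) (c * (x * (Rs (b * (x)))))
  have hh13 := hTrc' (x) (R (x * (Rs (a * (x)) * (x * (c * (x))))) * (b))
  have hh14 := hTrc' (x * (Rs (a * (x)) * (x))) (c * (x * (Rs (b * (x)))))
  have hh15 := hTrc' (x * (b)) (R (R (x * (a * (x))) * (x * (c * (x)))))
  have hh16 := hTrc' (x) (R (R (x * (a * (x))) * (x * (c * (x)))) * (b))
  have hh17 := hTrc' (x * (b)) (R (x * (c * (x * (Rs (x * (a)) * (x))))))
  have hh18 := hTrc' (x) (c * (x * (Rs (x * (a)) * (x * (Rs (x * (b)))))))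
  have hh19 := hTrc' (x * (b)) (R (x * (c * (x * (Rs (a * (x)) * (x))))))
  have hh20 := hTrc' (x) (c * (x * (Rs (a * (x)) * (x * (Rs (x * (b)))))))
  have hh21 := hTrc' (x) (R (x * (c * (x * (Rs (x * (a)) * (x))))) * (b))
  have hh22 := hTrc' (x) (c * (x * (Rs (x * (a)) * (x * (Rs (b * (x)))))))
  have hh23 := hTrc' (x) (R (x * (c * (x * (Rs (a * (x)) * (x))))) * (b))
  have hh24 := hTrc' (x) (c * (x * (Rs (a * (x)) * (x * (Rs (b * (x)))))))
  have hh25 := hTrc' (x * (b)) (R (x * (c * (x * (R (x * (a * (x))))))))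
  have hh26 := hTrc' (x) (R (x * (c * (x * (R (x * (a * (x))))))) * (b))
  have hh27 := hTrc' (x) (b * (R (x * (c * (x))) * (R (x * (a * (x))))))
  have hh28 := hTrc' (x * (R (x * (a * (x))) * (R (x * (c * (x)))))) (b)
  have hh29 := hTrc' (x * (c)) (R (x * (Rs (x * (a)) * (x * (b * (x))))))
  have hh30 := hTrc' (x * (Rs (x * (a)) * (x))) (b * (x * (Rs (x * (c)))))
  have hh31 := hTrc' (x * (c)) (R (x * (Rs (a * (x)) * (x * (b * (x))))))
  have hh32 := hTrc' (x * (Rs (a * (x)) * (x))) (b * (x * (Rs (x * (c)))))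
  have hh33 := hTrc' (x) (R (x * (Rs (x * (a)) * (x * (b * (x))))) * (c))
  have hh34 := hTrc' (x * (Rs (x * (a)) * (x))) (b * (x * (Rs (c * (x)))))
  have hh35 := hTrc' (x) (R (x * (Rs (a * (x)) * (x * (b * (x))))) * (c))
  have hh36 := hTrc' (x * (Rs (a * (x)) * (x))) (b * (x * (Rs (c * (x)))))
  have hh37 := hTrc' (x * (c)) (R (R (x * (a * (x))) * (x * (b * (x)))))
  have hh38 := hTrc' (x) (R (R (x * (a * (x))) * (x * (b * (x)))) * (c))
  have hh39 := hTrc' (x * (c)) (R (x * (b * (x * (Rs (x * (a)) * (x))))))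
  have hh40 := hTrc' (x) (b * (x * (Rs (x * (a)) * (x * (Rs (x * (c)))))))
  have hh41 := hTrc' (x * (c)) (R (x * (b * (x * (Rs (a * (x)) * (x))))))
  have hh42 := hTrc' (x) (b * (x * (Rs (a * (x)) * (x * (Rs (x * (c)))))))
  have hh43 := hTrc' (x) (R (x * (b * (x * (Rs (x * (a)) * (x))))) * (c))
  have hh44 := hTrc' (x) (b * (x * (Rs (x * (a)) * (x * (Rs (c * (x)))))))
  have hh45 := hTrc' (x) (R (x * (b * (x * (Rs (a * (x)) * (x))))) * (c))
  have hh46 := hTrc' (x) (b * (x * (Rs (a * (x)) * (x * (Rs (c * (x)))))))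
  have hh47 := hTrc' (x * (c)) (R (x * (b * (x * (R (x * (a * (x))))))))
  have hh48 := hTrc' (x) (R (x * (b * (x * (R (x * (a * (x))))))) * (c))
  have hh49 := hTrc' (x) (c * (R (x * (b * (x))) * (R (x * (a * (x))))))
  have hh50 := hTrc' (x * (R (x * (a * (x))) * (R (x * (b * (x)))))) (c)
  have hh51 := hTrc' (x * (a)) (R (x * (Rs (x * (b)) * (x * (c * (x))))))
  have hh52 := hTrc' (x * (Rs (x * (b)) * (x))) (c * (x * (Rs (x * (a)))))
  have hh53 := hTrc' (x * (a)) (R (x * (Rs (b * (x)) * (x * (c * (x))))))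
  have hh54 := hTrc' (x * (Rs (b * (x)) * (x))) (c * (x * (Rs (x * (a)))))
  have hh55 := hTrc' (x) (R (x * (Rs (x * (b)) * (x * (c * (x))))) * (a))
  have hh56 := hTrc' (x * (Rs (x * (b)) * (x))) (c * (x * (Rs (a * (x)))))
  have hh57 := hTrc' (x) (R (x * (Rs (b * (x)) * (x * (c * (x))))) * (a))
  have hh58 := hTrc' (x * (Rs (b * (x)) * (x))) (c * (x * (Rs (a * (x)))))
  have hh59 := hTrc' (x * (a)) (R (R (x * (b * (x))) * (x * (c * (x)))))
  have hh60 := hTrc' (x) (R (R (x * (b * (x))) * (x * (c * (x)))) * (a))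
  have hh61 := hTrc' (x * (a)) (R (x * (c * (x * (Rs (x * (b)) * (x))))))
  have hh62 := hTrc' (x) (c * (x * (Rs (x * (b)) * (x * (Rs (x * (a)))))))
  have hh63 := hTrc' (x * (a)) (R (x * (c * (x * (Rs (b * (x)) * (x))))))
  have hh64 := hTrc' (x) (c * (x * (Rs (b * (x)) * (x * (Rs (x * (a)))))))
  have hh65 := hTrc' (x) (R (x * (c * (x * (Rs (x * (b)) * (x))))) * (a))
  have hh66 := hTrc' (x) (c * (x * (Rs (x * (b)) * (x * (Rs (a * (x)))))))
  have hh67 := hTrc' (x) (R (x * (c * (x * (Rs (b * (x)) * (x))))) * (a))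
  have hh68 := hTrc' (x) (c * (x * (Rs (b * (x)) * (x * (Rs (a * (x)))))))
  have hh69 := hTrc' (x * (a)) (R (x * (c * (x * (R (x * (b * (x))))))))
  have hh70 := hTrc' (x) (R (x * (c * (x * (R (x * (b * (x))))))) * (a))
  have hh71 := hTrc' (x) (a * (R (x * (c * (x))) * (R (x * (b * (x))))))
  have hh72 := hTrc' (x * (R (x * (b * (x))) * (R (x * (c * (x)))))) (a)
  have hh73 := hTrc' (x * (c)) (R (x * (Rs (x * (b)) * (x * (a * (x))))))
  have hh74 := hTrc' (x * (Rs (x * (b)) * (x))) (a * (x * (Rs (x * (c)))))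
  have hh75 := hTrc' (x * (c)) (R (x * (Rs (b * (x)) * (x * (a * (x))))))
  have hh76 := hTrc' (x * (Rs (b * (x)) * (x))) (a * (x * (Rs (x * (c)))))
  have hh77 := hTrc' (x) (R (x * (Rs (x * (b)) * (x * (a * (x))))) * (c))
  have hh78 := hTrc' (x * (Rs (x * (b)) * (x))) (a * (x * (Rs (c * (x)))))
  have hh79 := hTrc' (x) (R (x * (Rs (b * (x)) * (x * (a * (x))))) * (c))
  have hh80 := hTrc' (x * (Rs (b * (x)) * (x))) (a * (x * (Rs (c * (x)))))
  have hh81 := hTrc' (x * (c)) (R (R (x * (b * (x))) * (x * (a * (x)))))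
  have hh82 := hTrc' (x) (R (R (x * (b * (x))) * (x * (a * (x)))) * (c))
  have hh83 := hTrc' (x * (c)) (R (x * (a * (x * (Rs (x * (b)) * (x))))))
  have hh84 := hTrc' (x) (a * (x * (Rs (x * (b)) * (x * (Rs (x * (c)))))))
  have hh85 := hTrc' (x * (c)) (R (x * (a * (x * (Rs (b * (x)) * (x))))))
  have hh86 := hTrc' (x) (a * (x * (Rs (b * (x)) * (x * (Rs (x * (c)))))))
  have hh87 := hTrc' (x) (R (x * (a * (x * (Rs (x * (b)) * (x))))) * (c))
  have hh88 := hTrc' (x) (a * (x * (Rs (x * (b)) * (x * (Rs (c * (x)))))))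
  have hh89 := hTrc' (x) (R (x * (a * (x * (Rs (b * (x)) * (x))))) * (c))
  have hh90 := hTrc' (x) (a * (x * (Rs (b * (x)) * (x * (Rs (c * (x)))))))
  have hh91 := hTrc' (x * (c)) (R (x * (a * (x * (R (x * (b * (x))))))))
  have hh92 := hTrc' (x) (R (x * (a * (x * (R (x * (b * (x))))))) * (c))
  have hh93 := hTrc' (x) (c * (R (x * (a * (x))) * (R (x * (b * (x))))))
  have hh94 := hTrc' (x * (R (x * (b * (x))) * (R (x * (a * (x)))))) (c)
  have hh95 := hTrc' (x * (a)) (R (x * (Rs (x * (c)) * (x * (b * (x))))))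
  have hh96 := hTrc' (x * (Rs (x * (c)) * (x))) (b * (x * (Rs (x * (a)))))
  have hh97 := hTrc' (x * (a)) (R (x * (Rs (c * (x)) * (x * (b * (x))))))
  have hh98 := hTrc' (x * (Rs (c * (x)) * (x))) (b * (x * (Rs (x * (a)))))
  have hh99 := hTrc' (x) (R (x * (Rs (x * (c)) * (x * (b * (x))))) * (a))
  have hh100 := hTrc' (x * (Rs (x * (c)) * (x))) (b * (x * (Rs (a * (x)))))
  have hh101 := hTrc' (x) (R (x * (Rs (c * (x)) * (x * (b * (x))))) * (a))
  have hh102 := hTrc' (x * (Rs (c * (x)) * (x))) (b * (x * (Rs (a * (x)))))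
  have hh103 := hTrc' (x * (a)) (R (R (x * (c * (x))) * (x * (b * (x)))))
  have hh104 := hTrc' (x) (R (R (x * (c * (x))) * (x * (b * (x)))) * (a))
  have hh105 := hTrc' (x * (a)) (R (x * (b * (x * (Rs (x * (c)) * (x))))))
  have hh106 := hTrc' (x) (b * (x * (Rs (x * (c)) * (x * (Rs (x * (a)))))))
  have hh107 := hTrc' (x * (a)) (R (x * (b * (x * (Rs (c * (x)) * (x))))))
  have hh108 := hTrc' (x) (b * (x * (Rs (c * (x)) * (x * (Rs (x * (a)))))))
  have hh109 := hTrc' (x) (R (x * (b * (x * (Rs (x * (c)) * (x))))) * (a))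
  have hh110 := hTrc' (x) (b * (x * (Rs (x * (c)) * (x * (Rs (a * (x)))))))
  have hh111 := hTrc' (x) (R (x * (b * (x * (Rs (c * (x)) * (x))))) * (a))
  have hh112 := hTrc' (x) (b * (x * (Rs (c * (x)) * (x * (Rs (a * (x)))))))
  have hh113 := hTrc' (x * (a)) (R (x * (b * (x * (R (x * (c * (x))))))))
  have hh114 := hTrc' (x) (R (x * (b * (x * (R (x * (c * (x))))))) * (a))
  have hh115 := hTrc' (x) (a * (R (x * (b * (x))) * (R (x * (c * (x))))))
  have hh116 := hTrc' (x * (R (x * (c * (x))) * (R (x * (b * (x)))))) (a)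
  have hh117 := hTrc' (x * (b)) (R (x * (Rs (x * (c)) * (x * (a * (x))))))
  have hh118 := hTrc' (x * (Rs (x * (c)) * (x))) (a * (x * (Rs (x * (b)))))
  have hh119 := hTrc' (x * (b)) (R (x * (Rs (c * (x)) * (x * (a * (x))))))
  have hh120 := hTrc' (x * (Rs (c * (x)) * (x))) (a * (x * (Rs (x * (b)))))
  have hh121 := hTrc' (x) (R (x * (Rs (x * (c)) * (x * (a * (x))))) * (b))
  have hh122 := hTrc' (x * (Rs (x * (c)) * (x))) (a * (x * (Rs (b * (x)))))
  have hh123 := hTrc' (x) (R (x * (Rs (c * (x)) * (x * (a * (x))))) * (b))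
  have hh124 := hTrc' (x * (Rs (c * (x)) * (x))) (a * (x * (Rs (b * (x)))))
  have hh125 := hTrc' (x * (b)) (R (R (x * (c * (x))) * (x * (a * (x)))))
  have hh126 := hTrc' (x) (R (R (x * (c * (x))) * (x * (a * (x)))) * (b))
  have hh127 := hTrc' (x * (b)) (R (x * (a * (x * (Rs (x * (c)) * (x))))))
  have hh128 := hTrc' (x) (a * (x * (Rs (x * (c)) * (x * (Rs (x * (b)))))))
  have hh129 := hTrc' (x * (b)) (R (x * (a * (x * (Rs (c * (x)) * (x))))))
  have hh130 := hTrc' (x) (a * (x * (Rs (c * (x)) * (x * (Rs (x * (b)))))))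
  have hh131 := hTrc' (x) (R (x * (a * (x * (Rs (x * (c)) * (x))))) * (b))
  have hh132 := hTrc' (x) (a * (x * (Rs (x * (c)) * (x * (Rs (b * (x)))))))
  have hh133 := hTrc' (x) (R (x * (a * (x * (Rs (c * (x)) * (x))))) * (b))
  have hh134 := hTrc' (x) (a * (x * (Rs (c * (x)) * (x * (Rs (b * (x)))))))
  have hh135 := hTrc' (x * (b)) (R (x * (a * (x * (R (x * (c * (x))))))))
  have hh136 := hTrc' (x) (R (x * (a * (x * (R (x * (c * (x))))))) * (b))
  have hh137 := hTrc' (x) (b * (R (x * (a * (x))) * (R (x * (c * (x))))))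
  have hh138 := hTrc' (x * (R (x * (c * (x))) * (R (x * (a * (x)))))) (b)
  have hh139 := hTrc' (R (x * (b * (x))) * (R (x * (c * (x))))) (a * (x))
  have hh140 := hTrc' (R (x * (c * (x))) * (R (x * (b * (x))))) (a * (x))
  have hh141 := hTrc' (x * (b * (x * (x * (c * (x)))))) (a * (x))
  have hh142 := hTrc' (x * (c * (x * (x * (b * (x)))))) (a * (x))
  have hh143 := hTrc' (R (x * (b * (x))) * (R (x * (a * (x))))) (c * (x))
  have hh144 := hTrc' (R (x * (a * (x))) * (R (x * (b * (x))))) (c * (x))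
  have hh145 := hTrc' (x * (b * (x * (x)))) (a * (x * (c * (x))))
  have hh146 := hTrc' (x) (a * (x * (x * (b * (x * (c * (x)))))))
  have hh147 := hTrc' (R (x * (b * (x))) * (R (x * (a * (x))) * (x))) (c)
  have hh148 := hTrc' (R (x * (a * (x))) * (R (x * (b * (x))) * (x))) (c)
  have hh149 := hTrc' (x * (b * (x * (x)))) (a * (x * (x * (c))))
  have hh150 := hTrc' (x) (a * (x * (x * (b * (x * (x * (c)))))))
  have hh151 := hTrc' (R (x * (a * (x))) * (R (x * (c * (x))))) (b * (x))
  have hh152 := hTrc' (R (x * (c * (x))) * (R (x * (a * (x))))) (b * (x))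
  have hh153 := hTrc' (x) (a * (x * (x * (c * (x * (b * (x)))))))
  have hh154 := hTrc' (x * (c * (x * (x)))) (a * (x * (b * (x))))
  have hh155 := hTrc' (R (x * (c * (x))) * (R (x * (a * (x))) * (x))) (b)
  have hh156 := hTrc' (R (x * (a * (x))) * (R (x * (c * (x))) * (x))) (b)
  have hh157 := hTrc' (x * (c * (x * (x)))) (a * (x * (x * (b))))
  have hh158 := hTrc' (x) (a * (x * (x * (c * (x * (x * (b)))))))
  have hh159 := hTrc' (R (x * (c * (x))) * (R (x * (b * (x))) * (x))) (a)
  have hh160 := hTrc' (R (x * (b * (x))) * (R (x * (c * (x))) * (x))) (a)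
  have hh161 := hTrc' (x * (c * (x * (x * (b * (x * (x))))))) (a)
  have hh162 := hTrc' (x * (b * (x * (x * (c * (x * (x))))))) (a)
  have hh163 := hadj (x * (Rs (x * (a)) * (x * (c * (x))))) (x * (b))
  have hh164 := hadj (x * (Rs (a * (x)) * (x * (c * (x))))) (x * (b))
  have hh165 := hadj (x * (Rs (x * (a)) * (x * (c * (x))))) (b * (x))
  have hh166 := hadj (x * (Rs (a * (x)) * (x * (c * (x))))) (b * (x))
  have hh167 := hadj (x * (c * (x * (Rs (x * (a)) * (x))))) (x * (b))
  have hh168 := hadj (x * (c * (x * (Rs (a * (x)) * (x))))) (x * (b))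
  have hh169 := hadj (x * (c * (x * (Rs (x * (a)) * (x))))) (b * (x))
  have hh170 := hadj (x * (c * (x * (Rs (a * (x)) * (x))))) (b * (x))
  have hh171 := hadj (x * (Rs (x * (a)) * (x * (b * (x))))) (x * (c))
  have hh172 := hadj (x * (Rs (a * (x)) * (x * (b * (x))))) (x * (c))
  have hh173 := hadj (x * (Rs (x * (a)) * (x * (b * (x))))) (c * (x))
  have hh174 := hadj (x * (Rs (a * (x)) * (x * (b * (x))))) (c * (x))
  have hh175 := hadj (x * (b * (x * (Rs (x * (a)) * (x))))) (x * (c))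
  have hh176 := hadj (x * (b * (x * (Rs (a * (x)) * (x))))) (x * (c))
  have hh177 := hadj (x * (b * (x * (Rs (x * (a)) * (x))))) (c * (x))
  have hh178 := hadj (x * (b * (x * (Rs (a * (x)) * (x))))) (c * (x))
  have hh179 := hadj (x * (Rs (x * (b)) * (x * (c * (x))))) (x * (a))
  have hh180 := hadj (x * (Rs (b * (x)) * (x * (c * (x))))) (x * (a))
  have hh181 := hadj (x * (Rs (x * (b)) * (x * (c * (x))))) (a * (x))
  have hh182 := hadj (x * (Rs (b * (x)) * (x * (c * (x))))) (a * (x))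
  have hh183 := hadj (x * (c * (x * (Rs (x * (b)) * (x))))) (x * (a))
  have hh184 := hadj (x * (c * (x * (Rs (b * (x)) * (x))))) (x * (a))
  have hh185 := hadj (x * (c * (x * (Rs (x * (b)) * (x))))) (a * (x))
  have hh186 := hadj (x * (c * (x * (Rs (b * (x)) * (x))))) (a * (x))
  have hh187 := hadj (x * (Rs (x * (b)) * (x * (a * (x))))) (x * (c))
  have hh188 := hadj (x * (Rs (b * (x)) * (x * (a * (x))))) (x * (c))
  have hh189 := hadj (x * (Rs (x * (b)) * (x * (a * (x))))) (c * (x))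
  have hh190 := hadj (x * (Rs (b * (x)) * (x * (a * (x))))) (c * (x))
  have hh191 := hadj (x * (a * (x * (Rs (x * (b)) * (x))))) (x * (c))
  have hh192 := hadj (x * (a * (x * (Rs (b * (x)) * (x))))) (x * (c))
  have hh193 := hadj (x * (a * (x * (Rs (x * (b)) * (x))))) (c * (x))
  have hh194 := hadj (x * (a * (x * (Rs (b * (x)) * (x))))) (c * (x))
  have hh195 := hadj (x * (Rs (x * (c)) * (x * (b * (x))))) (x * (a))
  have hh196 := hadj (x * (Rs (c * (x)) * (x * (b * (x))))) (x * (a))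
  have hh197 := hadj (x * (Rs (x * (c)) * (x * (b * (x))))) (a * (x))
  have hh198 := hadj (x * (Rs (c * (x)) * (x * (b * (x))))) (a * (x))
  have hh199 := hadj (x * (b * (x * (Rs (x * (c)) * (x))))) (x * (a))
  have hh200 := hadj (x * (b * (x * (Rs (c * (x)) * (x))))) (x * (a))
  have hh201 := hadj (x * (b * (x * (Rs (x * (c)) * (x))))) (a * (x))
  have hh202 := hadj (x * (b * (x * (Rs (c * (x)) * (x))))) (a * (x))
  have hh203 := hadj (x * (Rs (x * (c)) * (x * (a * (x))))) (x * (b))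
  have hh204 := hadj (x * (Rs (c * (x)) * (x * (a * (x))))) (x * (b))
  have hh205 := hadj (x * (Rs (x * (c)) * (x * (a * (x))))) (b * (x))
  have hh206 := hadj (x * (Rs (c * (x)) * (x * (a * (x))))) (b * (x))
  have hh207 := hadj (x * (a * (x * (Rs (x * (c)) * (x))))) (x * (b))
  have hh208 := hadj (x * (a * (x * (Rs (c * (x)) * (x))))) (x * (b))
  have hh209 := hadj (x * (a * (x * (Rs (x * (c)) * (x))))) (b * (x))
  have hh210 := hadj (x * (a * (x * (Rs (c * (x)) * (x))))) (b * (x))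
  simp only [mul_assoc] at hh1 hh2 hh3 hh4 hh5 hh6 hh7 hh8 hh9 hh10 hh11 hh12 hh13 hh14 hh15 hh16 hh17 hh18 hh19 hh20 hh21 hh22 hh23 hh24 hh25 hh26 hh27 hh28 hh29 hh30 hh31 hh32 hh33 hh34 hh35 hh36 hh37 hh38 hh39 hh40 hh41 hh42 hh43 hh44 hh45 hh46 hh47 hh48 hh49 hh50 hh51 hh52 hh53 hh54 hh55 hh56 hh57 hh58 hh59 hh60 hh61 hh62 hh63 hh64 hh65 hh66 hh67 hh68 hh69 hh70 hh71 hh72 hh73 hh74 hh75 hh76 hh77 hh78 hh79 hh80 hh81 hh82 hh83 hh84 hh85 hh86 hh87 hh88 hh89 hh90 hh91 hh92 hh93 hh94 hh95 hh96 hh97 hh98 hh99 hh100 hh101 hh102 hh103 hh104 hh105 hh106 hh107 hh108 hh109 hh110 hh111 hh112 hh113 hh114 hh115 hh116 hh117 hh118 hh119 hh120 hh121 hh122 hh123 hh124 hh125 hh126 hh127 hh128 hh129 hh130 hh131 hh132 hh133 hh134 hh135 hh136 hh137 hh138 hh139 hh140 hh141 hh142 hh143 hh144 hh145 hh146 hh147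 hh148 hh149 hh150 hh151 hh152 hh153 hh154 hh155 hh156 hh157 hh158 hh159 hh160 hh161 hh162 hh163 hh164 hh165 hh166 hh167 hh168 hh169 hh170 hh171 hh172 hh173 hh174 hh175 hh176 hh177 hh178 hh179 hh180 hh181 hh182 hh183 hh184 hh185 hh186 hh187 hh188 hh189 hh190 hh191 hh192 hh193 hh194 hh195 hh196 hh197 hh198 hh199 hh200 hh201 hh202 hh203 hh204 hh205 hh206 hh207 hh208 hh209 hh210
  linear_combination hh1 - hh2 + hh3 - hh4 - hh5 + hh6 + hh7 + hh8 - hh9 - hh10 - hh11 - hh12 + hh13 + hh14 - hh15 + hh16 + hh17 + hh18 - hh19 - hh20 - hh21 - hh22 + hh23 + hh24 + hh25 - hh26 - hh27 - hh28 - hh29 - hh30 + hh31 + hh32 + hh33 + hh34 - hh35 - hh36 + hh37 - hh38 - hh39 - hh40 + hh41 + hh42 + hh43 + hh44 - hh45 - hh46 - hh47 + hh48 + hh49 + hh50 - hh51 - hh52 + hh53 + hh54 + hh55 + hh56 - hh57 - hh58 + hh59 - hh60 - hh61 - hh62 + hh63 + hh64 + hh65 + hh66 - hh67 - hh68 - hh69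 + hh70 + hh71 + hh72 + hh73 + hh74 - hh75 - hh76 - hh77 - hh78 + hh79 + hh80 - hh81 + hh82 + hh83 + hh84 - hh85 - hh86 - hh87 - hh88 + hh89 + hh90 + hh91 - hh92 - hh93 - hh94 + hh95 + hh96 - hh97 - hh98 - hh99 - hh100 + hh101 + hh102 - hh103 + hh104 + hh105 + hh106 - hh107 - hh108 - hh109 - hh110 + hh111 + hh112 + hh113 - hh114 - hh115 - hh116 - hh117 - hh118 + hh119 + hh120 + hh121 + hh122 - hh123 - hh124 + hh125 - hh126 - hh127 - hh128 + hh129 + hh130 + hh131 + hh132 - hh133 - hh134 - hh135 + hh136 + hh137 + hh138 - hh139 + hh140 - hh141 + hh142 + hh143 - hh144 + hh145 - hh146 - hh147 + hh148 - hh149 + hh150 + hh151 - hh152 + hh153 - hh154 + hh155 - hh156 + hh157 - hh158 - hh159 + hh160 - hh161 + hh162 + hh163 - hh164 - hh165 + hh166 + hh167 - hh168 - hh169 + hh170 - hh171 + hh172 + hh173 - hh174 - hh175 + hh176 + hh177 - hh178 - hh179 + hh180 + hh181 - hh182 - hh183 + hh184 + hh185 - hh186 + hh187 - hh188 - hh189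 + hh190 + hh191 - hh192 - hh193 + hh194 + hh195 - hh196 - hh197 + hh198 + hh199 - hh200 - hh201 + hh202 - hh203 + hh204 + hh205 - hh206 - hh207 + hh208 + hh209 - hh210
end

section
/- Let g be a finite dimensional Lie algebra over F (char 0) and let R be an R-matrix over g. Let f,g ∈ S(g) be Casimirs of g, i.e. ∑_i (∂f/∂u_i)[x,u_i] = 0 for all x ∈ g (and similarly for g). Then for every ε ∈ F, {f,g}^{R,ε} = 0, where {·,·}^{R,ε} is the Oevel–Ragnisco ε-family of brackets defined on generators a,b ∈ g by {a,b}^{R,ε} = (1/2)∑_{i,j}(u^i + εTr(u^i))(u^j + εTr(u^j))([a,R(u_i b u_j)] − [b,R(u_i a u_j)]) and extended by the Leibniz rules. -/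
/-!
By the two Leibniz rules, `{f₁, f₂} = ∑ i j, ∂ᵢf₁ ∂ⱼf₂ {uᵢ, uⱼ}`, and on generators the bracket
has the antisymmetric shape `T i j - T j i` with `T i j` a combination of commutators `[uᵢ, y]`.
Contracting the first slot of `T` against `∂f₁` is the Casimir condition for `f₁`, so
`∑ i j, ∂ᵢf₁ ∂ⱼf₂ T i j = 0`, and symmetrically for `f₂`.
-/

open MvPolynomial

theorem MvPolynomial.derivation_eq_sum_pderiv_mul {R σ : Type*} [CommSemiring R] [Fintype σ]
    (D : Derivation R (MvPolynomial σ R) (MvPolynomial σ R)) (f : MvPolynomial σ R) :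
    D f = ∑ i, pderiv i f * D (X i) := by
  classical
  let E : Derivation R (MvPolynomial σ R) (MvPolynomial σ R) := ∑ i, D (X i) • pderiv i
  have hE : ∀ p, E p = ∑ i, pderiv i p * D (X i) := fun p => by
    change Derivation.coeFnAddMonoidHom E p = _
    simp [E, map_sum, Finset.sum_apply, mul_comm]
  have hDE : D = E := derivation_ext fun j => by simp [hE, pderiv_X, Pi.single_apply]
  rw [← hE, ← hDE]

theorem MvPolynomial.eq_sum_pderiv_mul_of_leibniz {R σ : Type*} [CommRing R] [Fintype σ]
    (D : MvPolynomial σ R →ₗ[R] MvPolynomial σ R) (hD : ∀ p q, D (p * q) = D p * q + p * D q)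
    (f : MvPolynomial σ R) : D f = ∑ i, pderiv i f * D (X i) :=
  derivation_eq_sum_pderiv_mul (Derivation.mk' D fun p q => by
    rw [hD, smul_eq_mul, smul_eq_mul]; ring) f

theorem MvPolynomial.eq_sum_pderiv_mul_pderiv_of_leibniz {R σ : Type*} [CommRing R] [Fintype σ]
    (B : MvPolynomial σ R →ₗ[R] MvPolynomial σ R →ₗ[R] MvPolynomial σ R)
    (hB₁ : ∀ f p q, B f (p * q) = B f p * q + p * B f q)
    (hB₂ : ∀ f p q, B (f * p) q = B f q * p + f * B p q) (f₁ f₂ : MvPolynomial σ R) :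
    B f₁ f₂ = ∑ i, ∑ j, pderiv i f₁ * pderiv j f₂ * B (X i) (X j) := by
  rw [← B.flip_apply, eq_sum_pderiv_mul_of_leibniz _ fun p q => hB₂ p q f₂]
  refine Finset.sum_congr rfl fun i _ => ?_
  rw [B.flip_apply, eq_sum_pderiv_mul_of_leibniz _ (hB₁ _), Finset.mul_sum]
  simp only [mul_assoc]

theorem Finset.sum_mul_mul_sub_swap_eq_zero {A ι : Type*} [CommRing A] [Fintype ι]
    (P Q : ι → A) (T : ι → ι → A) (hP : ∀ j, ∑ i, P i * T i j = 0)
    (hQ : ∀ i, ∑ j, Q j * T j i = 0) :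
    ∑ i, ∑ j, P i * Q j * (T i j - T j i) = 0 := by
  have h₁ : ∑ i, ∑ j, P i * Q j * T i j = 0 := by
    rw [Finset.sum_comm]
    refine Finset.sum_eq_zero fun j _ => ?_
    calc ∑ i, P i * Q j * T i j = Q j * ∑ i, P i * T i j := by
          rw [Finset.mul_sum]; exact Finset.sum_congr rfl fun i _ => by ring
      _ = 0 := by rw [hP, mul_zero]
  have h₂ : ∑ i, ∑ j, P i * Q j * T j i = 0 := by
    refine Finset.sum_eq_zero fun i _ => ?_
    simp_rw [mul_assoc, ← Finset.mul_sum, hQ, mul_zero]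
  simp only [mul_sub, Finset.sum_sub_distrib, h₁, h₂, sub_zero]

section Casimir

variable {F : Type*} [CommRing F] {g : Type*} [Ring g] [Module F g] {ι : Type*} [Fintype ι]

def IsCasimir (ℓ : g →ₗ[F] MvPolynomial ι F) (b : ι → g) (f : MvPolynomial ι F) : Prop :=
  ∀ x : g, ∑ i, pderiv i f * ℓ (x * b i - b i * x) = 0

theorem IsCasimir.sum_pderiv_mul_sum_commutator {ℓ : g →ₗ[F] MvPolynomial ι F} {b : ι → g}
    {f : MvPolynomial ι F} (hf : IsCasimir ℓ b f) {κ : Type*} [Fintype κ]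
    (c : κ → MvPolynomial ι F) (y : κ → g) :
    ∑ i, pderiv i f * ∑ s, c s * ℓ (b i * y s - y s * b i) = 0 := by
  simp_rw [Finset.mul_sum]
  rw [Finset.sum_comm]
  refine Finset.sum_eq_zero fun s _ => ?_
  simp_rw [mul_left_comm _ (c s), ← Finset.mul_sum, ← neg_sub (y s * _), map_neg, mul_neg,
    Finset.sum_neg_distrib, hf (y s), neg_zero, mul_zero]

end Casimir

theorem stmt_13_general {F : Type*} [Field F]
    {g : Type*} [Ring g] [Algebra F g]
    {ι : Type*} [Fintype ι]
    (b : Module.Basis ι F g) (v : ι → g)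
    (Tr : g →ₗ[F] F)
    (R : g →ₗ[F] g)
    (ε : F)
    (ℓ : g →ₗ[F] MvPolynomial ι F)
    (hℓ : ∀ i, ℓ (b i) = MvPolynomial.X i)
    (B : MvPolynomial ι F →ₗ[F] MvPolynomial ι F →ₗ[F] MvPolynomial ι F)
    (hLeib1 : ∀ f p q, B f (p * q) = B f p * q + p * B f q)
    (hLeib2 : ∀ f p q, B (f * p) q = B f q * p + f * B p q)
    (hgen : ∀ a c : g, B (ℓ a) (ℓ c) = (1 / 2 : F) •
      ∑ i, ∑ j,
        (ℓ (v i) + MvPolynomial.C (ε * Tr (v i))) *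
        (ℓ (v j) + MvPolynomial.C (ε * Tr (v j))) *
        ℓ ((a * R (b i * c * b j) - R (b i * c * b j) * a)
            - (c * R (b i * a * b j) - R (b i * a * b j) * c)))
    (f₁ f₂ : MvPolynomial ι F)
    (hf₁ : ∀ x : g, ∑ i, MvPolynomial.pderiv i f₁ * ℓ (x * b i - b i * x) = 0)
    (hf₂ : ∀ x : g, ∑ i, MvPolynomial.pderiv i f₂ * ℓ (x * b i - b i * x) = 0) :
    B f₁ f₂ = 0 := by
  set W : ι → MvPolynomial ι F := fun k => ℓ (v k) + C (ε * Tr (v k))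
  set T : ι → ι → MvPolynomial ι F := fun i j => ∑ kl : ι × ι,
    W kl.1 * W kl.2 * ℓ (b i * R (b kl.1 * b j * b kl.2) - R (b kl.1 * b j * b kl.2) * b i)
  have hX : ∀ i j, B (X i) (X j) = (1 / 2 : F) • (T i j - T j i) := fun i j => by
    simp only [← hℓ, hgen, T, W, Fintype.sum_prod_type, map_sub, mul_sub, Finset.sum_sub_distrib]
  rw [eq_sum_pderiv_mul_pderiv_of_leibniz B hLeib1 hLeib2]
  simp_rw [hX, mul_smul_comm, ← Finset.smul_sum]
  rw [Finset.sum_mul_mul_sub_swap_eq_zero _ _ T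
    (fun _ => IsCasimir.sum_pderiv_mul_sum_commutator hf₁ _ _)
    (fun _ => IsCasimir.sum_pderiv_mul_sum_commutator hf₂ _ _), smul_zero]

/-- Casimirs Poisson commute with respect to the whole Oevel–Ragnisco `ε`-family of
brackets: if `f₁, f₂` in the symmetric algebra (realized as `MvPolynomial ι F`) are
Casimirs, i.e. `∑_i (∂f/∂u_i) [x, u_i] = 0` for all `x`, then `{f₁, f₂}^{R,ε} = 0`,
where the `ε`-bracket is defined on generators by
`{a,c}^{R,ε} = (1/2) ∑_{i,j} (u^i + ε Tr u^i)(u^j + ε Tr u^j)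
  ([a, R(u_i c u_j)] - [c, R(u_i a u_j)])` and extended by the Leibniz rules. -/
theorem stmt_13 {F : Type*} [Field F] [CharZero F]
    {g : Type*} [Ring g] [Algebra F g] [FiniteDimensional F g]
    {ι : Type*} [Fintype ι] [DecidableEq ι]
    (b : Module.Basis ι F g) (v : ι → g)
    (Tr : g →ₗ[F] F)
    (hTrc : ∀ p q : g, Tr (p * q - q * p) = 0)
    (hTrnd : ∀ p : g, (∀ q : g, Tr (p * q) = 0) → p = 0)
    (hdual : ∀ i j, Tr (b i * v j) = if i = j then (1 : F) else 0)
    (R : g →ₗ[F] g)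
    (hR : ∀ p q : g, (R p * R q - R q * R p) - R (R p * q - q * R p)
          - R (p * R q - R q * p) + (p * q - q * p) = 0)
    (ε : F)
    (ℓ : g →ₗ[F] MvPolynomial ι F)
    (hℓ : ∀ i, ℓ (b i) = MvPolynomial.X i)
    (B : MvPolynomial ι F →ₗ[F] MvPolynomial ι F →ₗ[F] MvPolynomial ι F)
    (hLeib1 : ∀ f p q, B f (p * q) = B f p * q + p * B f q)
    (hLeib2 : ∀ f p q, B (f * p) q = B f q * p + f * B p q)
    (hgen : ∀ a c : g, B (ℓ a) (ℓ c) = (1 / 2 : F) •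
      ∑ i, ∑ j,
        (ℓ (v i) + MvPolynomial.C (ε * Tr (v i))) *
        (ℓ (v j) + MvPolynomial.C (ε * Tr (v j))) *
        ℓ ((a * R (b i * c * b j) - R (b i * c * b j) * a)
            - (c * R (b i * a * b j) - R (b i * a * b j) * c)))
    (f₁ f₂ : MvPolynomial ι F)
    (hf₁ : ∀ x : g, ∑ i, MvPolynomial.pderiv i f₁ * ℓ (x * b i - b i * x) = 0)
    (hf₂ : ∀ x : g, ∑ i, MvPolynomial.pderiv i f₂ * ℓ (x * b i - b i * x) = 0) :
    B f₁ f₂ = 0 :=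
  stmt_13_general b v Tr R ε ℓ hℓ B hLeib1 hLeib2 hgen f₁ f₂ hf₁ hf₂
end

section
/- Let F be a field of characteristic zero, F a commutative differential F-algebra (of 'test functions') with a linear functional ∫ : F → F vanishing on derivatives (∫ f' = 0), and let A be a finite dimensional unital associative algebra with trace form Tr. On g = F((∂⁻¹)) ⊗ A (pseudodifferential operators with coefficients in F, with values in A), define ⟨P(∂)X⟩ := ∫ res_∂ P(∂) · Tr(X). Then ⟨·⟩ vanishes on commutators of g: ⟨a∘b − b∘a⟩ = 0 for all a,b ∈ g. -/
open scoped TensorProduct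

/-- The generalized binomial coefficient `C(p,n) = p(p-1)⋯(p-n+1)/n!` in a field `F`. -/
noncomputable def binomF (F : Type*) [Field F] (p : ℤ) (n : ℕ) : F :=
  (∏ i ∈ Finset.range n, ((p : F) - (i : F))) / (n.factorial : F)

/-- Composition of pseudodifferential operators with coefficients in an `F`-algebra `B`
equipped with a derivation `D`.  An operator `P = ∑_p P p ∂^p` is encoded by its
coefficient function `P : ℤ → B`; composition is determined by
`∂^p ∘ f = ∑_{n ≥ 0} C(p,n) f^{(n)} ∂^{p-n}`. -/
noncomputable def pdoMul {F : Type*} [Field F] {B : Type*} [Ring B] [Algebra F B]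
    (D : B →ₗ[F] B) (P Q : ℤ → B) : ℤ → B :=
  fun k => ∑ᶠ p : ℤ, ∑ᶠ n : ℕ, binomF F p n • (P p * (D ^ n) (Q (k - p + n)))

lemma binomF_reflect {F : Type*} [Field F] {p q : ℤ} {n : ℕ} (h : p + q + 1 = (n : ℤ)) :
    binomF F q n = (-1) ^ n * binomF F p n := by
  unfold binomF
  rw [← mul_div_assoc]
  congr 1
  have key : ∀ i ∈ Finset.range n, ((q : F) - i) = -(((p : F)) - ((n - 1 - i : ℕ) : F)) := by
    intro i hi
    have hi' : i + 1 ≤ n := Finset.mem_range.mp hi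
    have h2 : (q : ℤ) - i = -((p : ℤ) - ((n - 1 - i : ℕ) : ℤ)) := by
      have h1 : ((n - 1 - i : ℕ) : ℤ) = (n : ℤ) - 1 - i := by omega
      omega
    have h3 := congrArg (Int.cast : ℤ → F) h2
    push_cast at h3
    exact_mod_cast h3
  rw [Finset.prod_congr rfl key]
  rw [Finset.prod_congr rfl (fun i _ => neg_eq_neg_one_mul _), Finset.prod_mul_distrib,
    Finset.prod_const, Finset.card_range]
  congr 1
  exact Finset.prod_range_reflect (fun j => (p : F) - (j : F)) n

section aux
variable {F : Type*} [Field F] {𝓕 : Type*} [CommRing 𝓕] [Algebra F 𝓕]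
  {A : Type*} [Ring A] [Algebra F A]

/-- The functional `⟨·⟩ = ∫ ⊗ Tr` on `𝓕 ⊗ A`. -/
noncomputable def phiAux (I : 𝓕 →ₗ[F] F) (Tr : A →ₗ[F] F) : 𝓕 ⊗[F] A →ₗ[F] F :=
  (TensorProduct.lid F F).toLinearMap ∘ₗ TensorProduct.map I Tr

variable (d : 𝓕 →ₗ[F] 𝓕) (I : 𝓕 →ₗ[F] F) (Tr : A →ₗ[F] F)

lemma phi_tmul (f : 𝓕) (X : A) : phiAux I Tr (f ⊗ₜ[F] X) = I f * Tr X := by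
  simp [phiAux, smul_eq_mul]

lemma D_leibniz (hd : ∀ f g : 𝓕, d (f * g) = d f * g + f * d g) (u v : 𝓕 ⊗[F] A) :
    LinearMap.rTensor A d (u * v)
      = LinearMap.rTensor A d u * v + u * LinearMap.rTensor A d v := by
  induction u using TensorProduct.induction_on with
  | zero => simp
  | add x y hx hy => simp only [add_mul, map_add, hx, hy]; abel
  | tmul f X =>
    induction v using TensorProduct.induction_on with
    | zero => simp
    | add x y hx hy => simp only [mul_add, map_add, hx, hy]; abel
    | tmul g Y =>
      simp only [Algebra.TensorProduct.tmul_mul_tmul, LinearMap.rTensor_tmul, hd,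
        TensorProduct.add_tmul]

lemma phi_comm (hTr : ∀ X Y : A, Tr (X * Y - Y * X) = 0) (u v : 𝓕 ⊗[F] A) :
    phiAux I Tr (u * v) = phiAux I Tr (v * u) := by
  have hTr' : ∀ X Y : A, Tr (X * Y) = Tr (Y * X) := by
    intro X Y
    have := hTr X Y
    rw [map_sub, sub_eq_zero] at this
    exact this
  induction u using TensorProduct.induction_on with
  | zero => simp
  | add x y hx hy => simp only [add_mul, mul_add, map_add, hx, hy]
  | tmul f X =>
    induction v using TensorProduct.induction_on with
    | zero => simp
    | add x y hx hy => simp only [mul_add, add_mul, map_add, hx, hy]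
    | tmul g Y =>
      rw [Algebra.TensorProduct.tmul_mul_tmul, Algebra.TensorProduct.tmul_mul_tmul,
        phi_tmul, phi_tmul, mul_comm g f, hTr']

lemma phi_D (hI : ∀ f : 𝓕, I (d f) = 0) (u : 𝓕 ⊗[F] A) :
    phiAux I Tr (LinearMap.rTensor A d u) = 0 := by
  induction u using TensorProduct.induction_on with
  | zero => simp
  | add x y hx hy => rw [map_add, map_add, hx, hy, add_zero]
  | tmul f X => rw [LinearMap.rTensor_tmul, phi_tmul, hI, zero_mul]

lemma phi_parts (hd : ∀ f g : 𝓕, d (f * g) = d f * g + f * d g)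
    (hI : ∀ f : 𝓕, I (d f) = 0) (u v : 𝓕 ⊗[F] A) :
    phiAux I Tr (u * LinearMap.rTensor A d v)
      = - phiAux I Tr (LinearMap.rTensor A d u * v) := by
  have h0 := phi_D d I Tr hI (u * v)
  rw [D_leibniz d hd, map_add] at h0
  linear_combination h0

lemma phi_pow (hd : ∀ f g : 𝓕, d (f * g) = d f * g + f * d g)
    (hI : ∀ f : 𝓕, I (d f) = 0) (hTr : ∀ X Y : A, Tr (X * Y - Y * X) = 0)
    (n : ℕ) : ∀ u v : 𝓕 ⊗[F] A,
    phiAux I Tr (u * (LinearMap.rTensor A d ^ n) v)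
      = (-1) ^ n * phiAux I Tr (v * (LinearMap.rTensor A d ^ n) u) := by
  induction n with
  | zero => intro u v; simpa using phi_comm I Tr hTr u v
  | succ n ih =>
    intro u v
    have hcomm : (LinearMap.rTensor A d ^ n) (LinearMap.rTensor A d u)
        = LinearMap.rTensor A d ((LinearMap.rTensor A d ^ n) u) := by
      rw [← Module.End.mul_apply, ← Module.End.mul_apply, ← pow_succ, ← pow_succ']
    rw [pow_succ' (LinearMap.rTensor A d) n, Module.End.mul_apply,
      phi_parts d I Tr hd hI, ih (LinearMap.rTensor A d u) v, Module.End.mul_apply, hcomm]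
    ring
end aux

/-- The `(p,q)` term of the residue of a product of pseudodifferential operators. -/
noncomputable def pdoTerm {F : Type*} [Field F] {B : Type*} [Ring B] [Algebra F B]
    (D : B →ₗ[F] B) (P Q : ℤ → B) (p q : ℤ) : B :=
  if 0 ≤ p + q + 1 then
    binomF F p (p + q + 1).toNat • (P p * (D ^ ((p + q + 1).toNat)) (Q q))
  else 0

lemma pdoMul_eq_sum {F : Type*} [Field F] {B : Type*} [Ring B] [Algebra F B]
    (D : B →ₗ[F] B) (P Q : ℤ → B) (N : ℤ)
    (hP : ∀ p, N < p → P p = 0) (hQ : ∀ p, N < p → Q p = 0) :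
    pdoMul D P Q (-1) = ∑ p ∈ Finset.Icc (-1 - N) N, ∑ q ∈ Finset.Icc (-1 - N) N,
      pdoTerm D P Q p q := by
  have hterm : ∀ p q, pdoTerm D P Q p q ≠ 0 →
      P p ≠ 0 ∧ Q q ≠ 0 ∧ 0 ≤ p + q + 1 := by
    intro p q h
    unfold pdoTerm at h
    by_cases h1 : 0 ≤ p + q + 1
    · rw [if_pos h1] at h
      refine ⟨?_, ?_, h1⟩
      · intro hp; rw [hp, zero_mul, smul_zero] at h; exact h rfl
      · intro hq; rw [hq, map_zero, mul_zero, smul_zero] at h; exact h rfl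
    · rw [if_neg h1] at h; exact absurd rfl h
  have hbound : ∀ p q, pdoTerm D P Q p q ≠ 0 →
      p ∈ Finset.Icc (-1 - N) N ∧ q ∈ Finset.Icc (-1 - N) N := by
    intro p q h
    obtain ⟨hp, hq, h1⟩ := hterm p q h
    have hp' : p ≤ N := by by_contra hc; exact hp (hP p (by omega))
    have hq' : q ≤ N := by by_contra hc; exact hq (hQ q (by omega))
    constructor <;> (rw [Finset.mem_Icc]; omega)
  have step1 : ∀ p : ℤ,
      (∑ᶠ n : ℕ, binomF F p n • (P p * (D ^ n) (Q (-1 - p + n))))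
        = ∑ᶠ q : ℤ, pdoTerm D P Q p q := by
    intro p
    set h : ℤ → B := fun m =>
      if 0 ≤ m then binomF F p m.toNat • (P p * (D ^ (m.toNat)) (Q (-1 - p + m))) else 0
      with hh
    have e1 : ∀ n : ℕ, binomF F p n • (P p * (D ^ n) (Q (-1 - p + n))) = h ↑n := by
      intro n; simp [hh]
    have e2 : (∑ᶠ n : ℕ, h ↑n) = ∑ᶠ m ∈ Set.range ((↑) : ℕ → ℤ), h m :=
      (finsum_mem_range (fun a b hab => by exact_mod_cast hab)).symm
    have e3 : (∑ᶠ m ∈ Set.range ((↑) : ℕ → ℤ), h m) = ∑ᶠ m ∈ Set.univ, h m := by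
      apply finsum_mem_inter_support_eq
      ext m
      simp only [Set.mem_inter_iff, Set.mem_range, Set.mem_univ, true_and,
        Function.mem_support, and_iff_right_iff_imp]
      intro hm
      have h0 : 0 ≤ m := by
        by_contra hc
        exact hm (by rw [hh]; simp only [if_neg hc])
      exact ⟨m.toNat, by omega⟩
    have e4 : (∑ᶠ m : ℤ, h m) = ∑ᶠ q : ℤ, h (p + 1 + q) :=
      (finsum_comp_equiv (Equiv.addLeft (p + 1))).symm
    have e5 : ∀ q : ℤ, h (p + 1 + q) = pdoTerm D P Q p q := by
      intro q
      rw [hh]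
      unfold pdoTerm
      have : p + 1 + q = p + q + 1 := by ring
      rw [this]
      beta_reduce
      by_cases h1 : 0 ≤ p + q + 1
      · rw [if_pos h1, if_pos h1]
        have hq2 : -1 - p + (p + q + 1) = q := by ring
        rw [hq2]
      · rw [if_neg h1, if_neg h1]
    rw [finsum_congr e1, e2, e3, finsum_mem_univ, e4, finsum_congr e5]
  have step2 : ∀ p : ℤ, (∑ᶠ q : ℤ, pdoTerm D P Q p q)
      = ∑ q ∈ Finset.Icc (-1 - N) N, pdoTerm D P Q p q := by
    intro p
    apply finsum_eq_finset_sum_of_support_subset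
    intro q hq
    exact (hbound p q hq).2
  show (∑ᶠ p : ℤ, ∑ᶠ n : ℕ, binomF F p n • (P p * (D ^ n) (Q (-1 - p + n)))) = _
  rw [finsum_congr step1, finsum_congr step2]
  apply finsum_eq_finset_sum_of_support_subset
  intro p hp
  rw [Function.mem_support] at hp
  obtain ⟨q, hq, hne⟩ := Finset.exists_ne_zero_of_sum_ne_zero hp
  exact (hbound p q hne).1

/-- On `g = 𝓕((∂⁻¹)) ⊗ A`, the functional `⟨P(∂) X⟩ = ∫ res_∂ P(∂) · Tr X` vanishes on
commutators: here pseudodifferential operators with coefficients in `𝓕 ⊗ A` are encoded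
as coefficient functions `ℤ → 𝓕 ⊗ A` with support bounded above, the residue is the
coefficient of `∂^{-1}`, the derivation is `d ⊗ 1`, and the functional is `(∫) ⊗ Tr`. -/
theorem stmt_16 {F : Type*} [Field F] [CharZero F]
    {𝓕 : Type*} [CommRing 𝓕] [Algebra F 𝓕]
    (d : 𝓕 →ₗ[F] 𝓕) (hd : ∀ f g : 𝓕, d (f * g) = d f * g + f * d g)
    (I : 𝓕 →ₗ[F] F) (hI : ∀ f : 𝓕, I (d f) = 0)
    (hInd : ∀ f : 𝓕, (∀ g : 𝓕, I (f * g) = 0) → f = 0)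
    {A : Type*} [Ring A] [Algebra F A] [FiniteDimensional F A]
    (Tr : A →ₗ[F] F) (hTr : ∀ X Y : A, Tr (X * Y - Y * X) = 0)
    (hTrnd : ∀ X : A, (∀ Y : A, Tr (X * Y) = 0) → X = 0)
    (P Q : ℤ → 𝓕 ⊗[F] A)
    (hP : ∃ N : ℤ, ∀ p, N < p → P p = 0)
    (hQ : ∃ N : ℤ, ∀ p, N < p → Q p = 0) :
    ((TensorProduct.lid F F).toLinearMap ∘ₗ TensorProduct.map I Tr)
      (pdoMul (LinearMap.rTensor A d) P Q (-1)
        - pdoMul (LinearMap.rTensor A d) Q P (-1)) = 0 := by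
  obtain ⟨NP, hNP⟩ := hP
  obtain ⟨NQ, hNQ⟩ := hQ
  have hP' : ∀ p, max NP NQ < p → P p = 0 := fun p hp =>
    hNP p (lt_of_le_of_lt (le_max_left _ _) hp)
  have hQ' : ∀ p, max NP NQ < p → Q p = 0 := fun p hp =>
    hNQ p (lt_of_le_of_lt (le_max_right _ _) hp)
  have hphi : ((TensorProduct.lid F F).toLinearMap ∘ₗ TensorProduct.map I Tr)
      = phiAux I Tr := rfl
  rw [hphi, map_sub, sub_eq_zero,
    pdoMul_eq_sum (LinearMap.rTensor A d) P Q (max NP NQ) hP' hQ',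
    pdoMul_eq_sum (LinearMap.rTensor A d) Q P (max NP NQ) hQ' hP']
  simp only [map_sum]
  conv_rhs => rw [Finset.sum_comm]
  refine Finset.sum_congr rfl fun p _ => Finset.sum_congr rfl fun q _ => ?_
  unfold pdoTerm
  by_cases h1 : 0 ≤ p + q + 1
  · have h1' : 0 ≤ q + p + 1 := by omega
    rw [if_pos h1, if_pos h1']
    have hqp : q + p + 1 = p + q + 1 := by ring
    rw [hqp]
    have hcast : p + q + 1 = (((p + q + 1).toNat : ℕ) : ℤ) := by omega
    rw [map_smul, map_smul, smul_eq_mul, smul_eq_mul,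
      phi_pow d I Tr hd hI hTr (p + q + 1).toNat (P p) (Q q),
      binomF_reflect (F := F) hcast]
    ring
  · have h1' : ¬ 0 ≤ q + p + 1 := by omega
    rw [if_neg h1, if_neg h1']
end

section
/- Let F be a commutative differential algebra and F((∂⁻¹)) the algebra of pseudodifferential operators. For k ∈ ℤ, the direct sum decomposition F((∂⁻¹)) = F[∂]∂^k ⊕ F[[∂⁻¹]]∂^{k−1} holds as left F-modules; moreover F[∂]∂^k is closed under composition for all k ≥ 0, F[[∂⁻¹]]∂^{k−1} is closed under composition for k ≤ 1, and F[[∂⁻¹]]∂ (the case k = 2) is closed under the commutator bracket when F is commutative. -/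
/-- `𝓕[∂]∂^k`: differential operators all of whose terms have order at least `k`
(and finitely many terms). -/
def UpSet {𝓕 : Type*} [Zero 𝓕] (k : ℤ) : Set (ℤ → 𝓕) :=
  {P | (∀ p, p < k → P p = 0) ∧ ∃ N : ℤ, ∀ p, N < p → P p = 0}

/-- `𝓕[[∂⁻¹]]∂^{k-1}`: pseudodifferential operators of order at most `k - 1`. -/
def LoSet {𝓕 : Type*} [Zero 𝓕] (k : ℤ) : Set (ℤ → 𝓕) :=
  {P | ∀ p, k ≤ p → P p = 0}

lemma binomF_eq_zero {F : Type*} [Field F] {p : ℤ} {n : ℕ}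
    (hp : 0 ≤ p) (hpn : p < (n : ℤ)) : binomF F p n = 0 := by
  unfold binomF
  have hmem : p.toNat ∈ Finset.range n := Finset.mem_range.mpr (by omega)
  rw [Finset.prod_eq_zero hmem, zero_div]
  have : ((p.toNat : ℕ) : F) = (p : F) := by
    rw [← Int.cast_natCast, Int.toNat_of_nonneg hp]
  rw [this, sub_self]

/-- For every `k ∈ ℤ` one has the direct sum decomposition
`𝓕((∂⁻¹)) = 𝓕[∂]∂^k ⊕ 𝓕[[∂⁻¹]]∂^{k-1}`; moreover `𝓕[∂]∂^k` is closed under composition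
for `k ≥ 0`, `𝓕[[∂⁻¹]]∂^{k-1}` is closed under composition for `k ≤ 1`, and
`𝓕[[∂⁻¹]]∂` (the case `k = 2`) is closed under the commutator bracket
(`𝓕` being commutative). -/
theorem stmt_17 {F : Type*} [Field F] [CharZero F]
    {𝓕 : Type*} [CommRing 𝓕] [Algebra F 𝓕]
    (d : 𝓕 →ₗ[F] 𝓕) (hd : ∀ f g : 𝓕, d (f * g) = d f * g + f * d g) :
    (∀ k : ℤ, ∀ P : ℤ → 𝓕, (∃ N : ℤ, ∀ p, N < p → P p = 0) →
      ∃! GH : (ℤ → 𝓕) × (ℤ → 𝓕),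
        GH.1 ∈ UpSet k ∧ GH.2 ∈ LoSet k ∧ P = GH.1 + GH.2) ∧
    (∀ k : ℤ, 0 ≤ k → ∀ P ∈ UpSet (𝓕 := 𝓕) k, ∀ Q ∈ UpSet (𝓕 := 𝓕) k,
      pdoMul d P Q ∈ UpSet (𝓕 := 𝓕) k) ∧
    (∀ k : ℤ, k ≤ 1 → ∀ P ∈ LoSet (𝓕 := 𝓕) k, ∀ Q ∈ LoSet (𝓕 := 𝓕) k,
      pdoMul d P Q ∈ LoSet (𝓕 := 𝓕) k) ∧
    (∀ P ∈ LoSet (𝓕 := 𝓕) 2, ∀ Q ∈ LoSet (𝓕 := 𝓕) 2,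
      pdoMul d P Q - pdoMul d Q P ∈ LoSet (𝓕 := 𝓕) 2) := by
  refine ⟨?_, ?_, ?_, ?_⟩
  · -- direct sum decomposition
    rintro k P ⟨N, hN⟩
    refine ⟨(fun p => if k ≤ p then P p else 0, fun p => if k ≤ p then 0 else P p),
      ⟨⟨?_, ⟨N, ?_⟩⟩, ?_, ?_⟩, ?_⟩
    · intro p hp; simp [not_le.mpr hp]
    · intro p hp; simp [hN p hp]
    · intro p hp; simp [hp]
    · funext p; by_cases hp : k ≤ p <;> simp [Pi.add_apply, hp]
    · rintro ⟨G, H⟩ ⟨⟨hG1, hG2⟩, hH, hPeq⟩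
      have hH' : ∀ p, k ≤ p → H p = 0 := hH
      have hG1' : ∀ p, p < k → G p = 0 := hG1
      have hGe : G = fun p => if k ≤ p then P p else 0 := by
        funext p
        have hp := congrFun hPeq p
        simp only [Pi.add_apply] at hp
        by_cases h : k ≤ p
        · simp [h, hp, hH' p h]
        · simp [h, hG1' p (not_le.mp h)]
      have hHe : H = fun p => if k ≤ p then 0 else P p := by
        funext p
        have hp := congrFun hPeq p
        simp only [Pi.add_apply] at hp
        by_cases h : k ≤ p
        · simp [h, hH' p h]
        · simp [h, hp, hG1' p (not_le.mp h)]
      rw [hGe, hHe]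
  · -- UpSet closed under composition for k ≥ 0
    rintro k hk P ⟨hPlo, NP, hPhi⟩ Q ⟨hQlo, NQ, hQhi⟩
    refine ⟨?_, ⟨NP + NQ, ?_⟩⟩
    · intro m hm
      apply finsum_eq_zero_of_forall_eq_zero; intro p
      apply finsum_eq_zero_of_forall_eq_zero; intro n
      by_cases hp : P p = 0
      · simp [hp]
      by_cases hq : Q (m - p + n) = 0
      · simp [hq]
      have hpk : k ≤ p := not_lt.mp (fun h => hp (hPlo p h))
      have h2 : k ≤ m - p + n := not_lt.mp (fun h => hq (hQlo _ h))
      have hb : binomF F p n = 0 := binomF_eq_zero (le_trans hk hpk) (by omega)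
      simp [hb]
    · intro m hm
      apply finsum_eq_zero_of_forall_eq_zero; intro p
      apply finsum_eq_zero_of_forall_eq_zero; intro n
      by_cases hp : P p = 0
      · simp [hp]
      by_cases hq : Q (m - p + n) = 0
      · simp [hq]
      have h1 : ¬ NP < p := fun h => hp (hPhi p h)
      have h2 : ¬ NQ < m - p + n := fun h => hq (hQhi _ h)
      omega
  · -- LoSet closed under composition for k ≤ 1
    intro k hk P hP Q hQ m hm
    apply finsum_eq_zero_of_forall_eq_zero; intro p
    apply finsum_eq_zero_of_forall_eq_zero; intro n
    by_cases hp : P p = 0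
    · simp [hp]
    by_cases hq : Q (m - p + n) = 0
    · simp [hq]
    have h1 : ¬ k ≤ p := fun h => hp (hP p h)
    have h2 : ¬ k ≤ m - p + n := fun h => hq (hQ _ h)
    omega
  · -- commutator bracket on LoSet 2
    intro P hP Q hQ
    have key : ∀ R S : ℤ → 𝓕, (∀ p, (2:ℤ) ≤ p → R p = 0) → (∀ p, (2:ℤ) ≤ p → S p = 0) →
        ∀ m : ℤ, 2 ≤ m → pdoMul d R S m = if m = 2 then R 1 * S 1 else 0 := by
      intro R S hR hS m hm
      by_cases hm2 : m = 2
      · subst hm2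
        simp only [if_pos rfl, pdoMul]
        rw [finsum_eq_single _ (1 : ℤ)]
        · rw [finsum_eq_single _ (0 : ℕ)]
          · norm_num [binomF]
          · intro n hn
            have hn1 : S (2 - 1 + (n:ℤ)) = 0 := hS _ (by omega)
            rw [hn1]
            simp
        · intro p hp
          apply finsum_eq_zero_of_forall_eq_zero; intro n
          by_cases hr : R p = 0
          · simp [hr]
          by_cases hs : S (2 - p + n) = 0
          · simp [hs]
          have h1 : ¬ (2:ℤ) ≤ p := fun h => hr (hR p h)
          have h2 : ¬ (2:ℤ) ≤ 2 - p + n := fun h => hs (hS _ h)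
          omega
      · rw [if_neg hm2]
        apply finsum_eq_zero_of_forall_eq_zero; intro p
        apply finsum_eq_zero_of_forall_eq_zero; intro n
        by_cases hr : R p = 0
        · simp [hr]
        by_cases hs : S (m - p + n) = 0
        · simp [hs]
        have h1 : ¬ (2:ℤ) ≤ p := fun h => hr (hR p h)
        have h2 : ¬ (2:ℤ) ≤ m - p + n := fun h => hs (hS _ h)
        omega
    intro m hm
    have h1 := key P Q hP hQ m hm
    have h2 := key Q P hQ hP m hm
    simp only [Pi.sub_apply, h1, h2]
    by_cases hm2 : m = 2 <;> simp [hm2, mul_comm]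
end
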